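/- arXiv:1601.08229 — 5 statements merged into one kernel-verified Lean document; each statement's English description precedes it below -/
import Mathlib

section
/- Let A, B, C be finite-dimensional complex vector spaces and T ∈ A ⊗ B ⊗ C a tensor with border rank r ≥ 1. Then there exists a nonzero vector a ∈ A such that the image T' of T under the projection A ⊗ B ⊗ C → (A/⟨a⟩) ⊗ B ⊗ C has border rank at most r − 1. -/
/-!
Write `T` as a limit of tensors `S n = ∑ₗ u n l ⊗ v n l ⊗ w n l` of rank at most `r`. By
compactness of the unit sphere, along a subsequence the direction of `u n 0` converges to a
unit vector `a`. Any `π` killing `a` is then a limit of maps `πₙ` killing `u n 0`, so `πₙ (S n)`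
has rank at most `r - 1` and converges to `π T`.
-/

open scoped BigOperators

/-- A tensor `T`, given by its coordinate array, has rank at most `r`. -/
def tensorRankLE {ιa ιb ιc : Type*} (r : ℕ) (T : ιa → ιb → ιc → ℂ) : Prop :=
  ∃ (u : Fin r → ιa → ℂ) (v : Fin r → ιb → ℂ) (w : Fin r → ιc → ℂ),
    ∀ i j k, T i j k = ∑ l, u l i * v l j * w l k

/-- `T` has border rank at most `r` : it is a limit of tensors of rank at most `r`. -/
def borderRankLE {ιa ιb ιc : Type*} (r : ℕ) (T : ιa → ιb → ιc → ℂ) : Prop :=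
  T ∈ closure {S : ιa → ιb → ιc → ℂ | tensorRankLE r S}

/-- The border rank of a tensor. -/
noncomputable def borderRank {ιa ιb ιc : Type*} (T : ιa → ιb → ιc → ℂ) : ℕ :=
  sInf {r | borderRankLE r T}

open Filter Topology Matrix Metric

section Perturbation

variable {ι K m n : Type*} [NormedField K] [Fintype n] [DecidableEq n]

theorem exists_tendsto_mulVec_eq_zero {l : Filter ι} {y : ι → n → K} {a : n → K}
    (hy : Tendsto y l (𝓝 a)) (ha : a ≠ 0) {M : Matrix m n K} (hM : M *ᵥ a = 0) :
    ∃ N : ι → Matrix m n K, Tendsto N l (𝓝 M) ∧ ∀ᶠ t in l, N t *ᵥ y t = 0 := by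
  obtain ⟨i, hi⟩ : ∃ i, a i ≠ 0 := Function.ne_iff.mp ha
  -- `N b` kills `b` whenever `b i ≠ 0`, and `N a = M` since `M *ᵥ a = 0`.
  let N : (n → K) → Matrix m n K := fun b => M - (b i)⁻¹ • vecMulVec (M *ᵥ b) (Pi.single i 1)
  refine ⟨N ∘ y, ?_, ?_⟩
  · have hinv : ContinuousAt (fun b : n → K => (b i)⁻¹) a :=
      (continuous_apply i).continuousAt.inv₀ hi
    have hN : ContinuousAt N a :=
      continuousAt_const.sub (hinv.smul (by fun_prop : Continuous fun b : n → K =>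
        vecMulVec (M *ᵥ b) (Pi.single i 1)).continuousAt)
    simpa [N, hM] using hN.tendsto.comp hy
  · filter_upwards [((continuous_apply i).tendsto a).comp hy |>.eventually_ne hi]
      with t (ht : y t i ≠ 0)
    simp [N, sub_mulVec, smul_mulVec, vecMulVec_mulVec, smul_smul, inv_mul_cancel₀ ht]

end Perturbation

theorem exists_mem_sphere_smul_eq {𝕜 E : Type*} [RCLike 𝕜] [NormedAddCommGroup E]
    [NormedSpace 𝕜 E] [Nontrivial E] (x : E) :
    ∃ y ∈ sphere (0 : E) 1, ∃ c : 𝕜, x = c • y := by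
  obtain rfl | hx := eq_or_ne x 0
  · obtain ⟨y⟩ := NormedSpace.sphere_nonempty_rclike 𝕜 (E := E) zero_le_one
    exact ⟨y, y.2, 0, (zero_smul 𝕜 _).symm⟩
  · refine ⟨(‖x‖⁻¹ : 𝕜) • x, mem_sphere_zero_iff_norm.mpr (norm_smul_inv_norm hx), ‖x‖, ?_⟩
    simp [smul_smul, hx]

theorem exists_subseq_tendsto_smul {𝕜 E : Type*} [RCLike 𝕜] [NormedAddCommGroup E]
    [NormedSpace 𝕜 E] [ProperSpace E] [Nontrivial E] (x : ℕ → E) :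
    ∃ a ≠ 0, ∃ φ : ℕ → ℕ, StrictMono φ ∧ ∃ y : ℕ → E, Tendsto y atTop (𝓝 a) ∧
      ∀ n, ∃ c : 𝕜, x (φ n) = c • y n := by
  choose y hy c hc using fun n => exists_mem_sphere_smul_eq (𝕜 := 𝕜) (x n)
  obtain ⟨a, ha, φ, hφ, hlim⟩ := (isCompact_sphere (0 : E) 1).tendsto_subseq hy
  exact ⟨a, ne_zero_of_mem_unit_sphere ⟨a, ha⟩, φ, hφ, y ∘ φ, hlim, fun n => ⟨c (φ n), hc (φ n)⟩⟩

section Tensor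

variable {ιa ιa' ιb ιc : Type*} [Fintype ιa]

def contractFirst (M : Matrix ιa' ιa ℂ) (T : ιa → ιb → ιc → ℂ) : ιa' → ιb → ιc → ℂ :=
  fun m j k => ∑ i, T i j k * M m i

theorem continuous_contractFirst :
    Continuous fun p : Matrix ιa' ιa ℂ × (ιa → ιb → ιc → ℂ) => contractFirst p.1 p.2 := by
  unfold contractFirst
  fun_prop

theorem tensorRankLE_contractFirst {r : ℕ} {S : ιa → ιb → ιc → ℂ}
    {u : Fin (r + 1) → ιa → ℂ} {v : Fin (r + 1) → ιb → ℂ} {w : Fin (r + 1) → ιc → ℂ}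
    (hS : ∀ i j k, S i j k = ∑ l, u l i * v l j * w l k) {M : Matrix ιa' ιa ℂ}
    (hM : M *ᵥ u 0 = 0) : tensorRankLE r (contractFirst M S) := by
  refine ⟨fun l => M *ᵥ u l.succ, fun l => v l.succ, fun l => w l.succ, fun m j k => ?_⟩
  have hexpand : contractFirst M S m j k = ∑ l, (M *ᵥ u l) m * v l j * w l k := by
    simp only [contractFirst, hS, mulVec, dotProduct, Finset.sum_mul]
    rw [Finset.sum_comm]
    exact Finset.sum_congr rfl fun l _ => Finset.sum_congr rfl fun i _ => by ring
  rw [hexpand, Fin.sum_univ_succ, hM]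
  simp

theorem borderRankLE_contractFirst_of_tendsto {ι : Type*} {l : Filter ι} [l.NeBot] {r : ℕ}
    {S : ι → ιa → ιb → ιc → ℂ} {T : ιa → ιb → ιc → ℂ} (hS : Tendsto S l (𝓝 T))
    {M : ι → Matrix ιa' ιa ℂ} {M₀ : Matrix ιa' ιa ℂ} (hM : Tendsto M l (𝓝 M₀))
    (hrank : ∀ᶠ t in l, tensorRankLE r (contractFirst (M t) (S t))) :
    borderRankLE r (contractFirst M₀ T) :=
  mem_closure_of_tendsto ((continuous_contractFirst.tendsto _).comp (hM.prodMk_nhds hS)) hrank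

end Tensor

theorem borderRankLE_borderRank {ιa ιb ιc : Type*} {T : ιa → ιb → ιc → ℂ}
    (h : borderRank T ≠ 0) : borderRankLE (borderRank T) T :=
  Nat.sInf_mem (Nat.nonempty_of_pos_sInf (Nat.pos_of_ne_zero h))

theorem borderRank_eq_zero_of_isEmpty {ιa ιb ιc : Type*} [IsEmpty ιa] (T : ιa → ιb → ιc → ℂ) :
    borderRank T = 0 :=
  Nat.sInf_eq_zero.mpr (Or.inl (subset_closure ⟨0, 0, 0, fun i => isEmptyElim i⟩))

/-- Border rank version of the substitution method: if `T ∈ A ⊗ B ⊗ C` has border rank `r ≥ 1`,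
then there is a nonzero vector `a ∈ A` such that the image of `T` under the projection
`A ⊗ B ⊗ C → (A/⟨a⟩) ⊗ B ⊗ C` (induced by any surjection `π : A → A/⟨a⟩` with kernel `⟨a⟩`)
has border rank at most `r − 1`. -/
theorem stmt0 (da db dc r : ℕ) (hr : 1 ≤ r) (T : Fin da → Fin db → Fin dc → ℂ)
    (hT : borderRank T = r) :
    ∃ a : Fin da → ℂ, a ≠ 0 ∧
      ∀ π : (Fin da → ℂ) →ₗ[ℂ] (Fin (da - 1) → ℂ), Function.Surjective π →
        LinearMap.ker π = Submodule.span ℂ {a} →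
        borderRankLE (r - 1)
          (fun m j k => ∑ i, T i j k * π (Pi.single i 1) m) := by
  obtain ⟨r, rfl⟩ := Nat.exists_eq_add_of_le' hr
  have hBR : borderRankLE (r + 1) T := hT ▸ borderRankLE_borderRank (by omega)
  have : Nonempty (Fin da) :=
    not_isEmpty_iff.mp fun _ => by have := borderRank_eq_zero_of_isEmpty T; omega
  obtain ⟨S, hS, hST⟩ := mem_closure_iff_seq_limit.mp hBR
  choose u v w huvw using hS
  obtain ⟨a, ha, φ, hφ, y, hy, hyu⟩ := exists_subseq_tendsto_smul (𝕜 := ℂ) fun n => u n 0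
  refine ⟨a, ha, fun π _ hker => ?_⟩
  have hπa : LinearMap.toMatrix' π *ᵥ a = 0 := by
    rw [LinearMap.toMatrix'_mulVec, ← LinearMap.mem_ker, hker]
    exact Submodule.mem_span_singleton_self a
  obtain ⟨M, hM, hMy⟩ := exists_tendsto_mulVec_eq_zero hy ha hπa
  show borderRankLE r (contractFirst (LinearMap.toMatrix' π) T)
  refine borderRankLE_contractFirst_of_tendsto (hST.comp hφ.tendsto_atTop) hM ?_
  filter_upwards [hMy] with n hn
  obtain ⟨c, hc⟩ := hyu n
  exact tensorRankLE_contractFirst (huvw (φ n)) (by rw [hc, mulVec_smul, hn, smul_zero])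
end

section
/- Let A, B, C be finite-dimensional complex vector spaces, fix a basis a_1, …, a_m of A, and write T = Σ_{i=1}^m a_i ⊗ M_i with M_i ∈ B ⊗ C. If the rank of T is r and M_1 ≠ 0, then there exist constants λ_2, …, λ_m ∈ ℂ such that the tensor T̃ = Σ_{j=2}^m a_j ⊗ (M_j − λ_j M_1) has rank at most r − 1. -/
open scoped BigOperators

/-- The rank of a tensor: the least `r` such that `T` is a sum of `r` simple tensors. -/
noncomputable def tensorRank {ιa ιb ιc : Type*} (T : ιa → ιb → ιc → ℂ) : ℕ :=
  sInf {r | tensorRankLE r T}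

/-!
Write `T = ∑ₗ uₗ ⊗ vₗ ⊗ wₗ` with `r` terms. Since the slice `T i₀` is nonzero, some `uₗ₀` has a
nonzero `i₀`-coordinate. Subtracting `λᵢ = uₗ₀ i / uₗ₀ i₀` times the slice `T i₀` from every slice
`T i` replaces each `uₗ` by `uₗ - uₗ i₀ • λ`, which kills `uₗ₀`; the remaining `r - 1` terms
decompose the new tensor.
-/

section TensorRank

variable {ιa ιb ιc : Type*}

theorem tensorRankLE_card [Fintype ιa] [Fintype ιb] (T : ιa → ιb → ιc → ℂ) :
    tensorRankLE (Fintype.card (ιa × ιb)) T := by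
  classical
  let e := (Fintype.equivFin (ιa × ιb)).symm
  refine ⟨fun l i => if i = (e l).1 then 1 else 0, fun l j => if j = (e l).2 then 1 else 0,
    fun l k => T (e l).1 (e l).2 k, fun i j k => ?_⟩
  rw [← e.symm.sum_comp]
  simp [Fintype.sum_prod_type, ite_mul]

theorem tensorRankLE_tensorRank [Fintype ιa] [Fintype ιb] (T : ιa → ιb → ιc → ℂ) :
    tensorRankLE (tensorRank T) T :=
  Nat.sInf_mem (s := {r | tensorRankLE r T}) ⟨_, tensorRankLE_card T⟩

theorem tensorRankLE_pred_of_coeff_eq_zero {r : ℕ} {T : ιa → ιb → ιc → ℂ}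
    {u : Fin r → ιa → ℂ} {v : Fin r → ιb → ℂ} {w : Fin r → ιc → ℂ}
    (hT : ∀ i j k, T i j k = ∑ l, u l i * v l j * w l k) {l₀ : Fin r} (hl₀ : u l₀ = 0) :
    tensorRankLE (r - 1) T := by
  obtain ⟨r, rfl⟩ := Nat.exists_eq_add_one_of_ne_zero l₀.pos.ne'
  refine ⟨fun l => u (l₀.succAbove l), fun l => v (l₀.succAbove l),
    fun l => w (l₀.succAbove l), fun i j k => ?_⟩
  simp [hT, Fin.sum_univ_succAbove _ l₀, hl₀]

theorem exists_coeff_ne_zero_of_slice_ne_zero {r : ℕ} {T : ιa → ιb → ιc → ℂ}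
    {u : Fin r → ιa → ℂ} {v : Fin r → ιb → ℂ} {w : Fin r → ιc → ℂ}
    (hT : ∀ i j k, T i j k = ∑ l, u l i * v l j * w l k) {i₀ : ιa} (h : T i₀ ≠ 0) :
    ∃ l, u l i₀ ≠ 0 := by
  contrapose! h
  funext j k
  simp [hT, h]

theorem sub_smul_slice_eq_sum {r : ℕ} {T : ιa → ιb → ιc → ℂ}
    {u : Fin r → ιa → ℂ} {v : Fin r → ιb → ℂ} {w : Fin r → ιc → ℂ}
    (hT : ∀ i j k, T i j k = ∑ l, u l i * v l j * w l k) (lam : ιa → ℂ) (i₀ : ιa) (i j k) :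
    T i j k - lam i * T i₀ j k = ∑ l, (u l i - lam i * u l i₀) * v l j * w l k := by
  rw [hT, hT, Finset.mul_sum, ← Finset.sum_sub_distrib]
  exact Finset.sum_congr rfl fun l _ => by ring

theorem exists_tensorRankLE_pred_sub_smul_slice {r : ℕ} {T : ιa → ιb → ιc → ℂ}
    (hT : tensorRankLE r T) {i₀ : ιa} (h : T i₀ ≠ 0) :
    ∃ lam : ιa → ℂ, lam i₀ = 1 ∧
      tensorRankLE (r - 1) (fun i j k => T i j k - lam i * T i₀ j k) := by
  obtain ⟨u, v, w, hT⟩ := hT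
  obtain ⟨l₀, hl₀⟩ := exists_coeff_ne_zero_of_slice_ne_zero hT h
  let lam i := u l₀ i / u l₀ i₀
  refine ⟨lam, div_self hl₀, tensorRankLE_pred_of_coeff_eq_zero
    (sub_smul_slice_eq_sum hT lam i₀) (l₀ := l₀) ?_⟩
  funext i
  simp [lam, div_mul_cancel₀ _ hl₀]

end TensorRank

/-- Substitution method (Alexeev–Forbes–Tsimerman): if `T = ∑ aᵢ ⊗ Mᵢ` has rank `r`
and the slice `M₁ = T i₀ ≠ 0`, then there are constants `λⱼ` such that
`T̃ = ∑_{j ≠ i₀} aⱼ ⊗ (Mⱼ − λⱼ M₁)` has rank at most `r − 1`. -/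
theorem stmt1 (m b c r : ℕ) (hm : 0 < m) (T : Fin m → Fin b → Fin c → ℂ)
    (hT : tensorRank T = r) (h1 : T ⟨0, hm⟩ ≠ 0) :
    ∃ lam : Fin m → ℂ,
      tensorRankLE (r - 1)
        (fun i j k => if i = ⟨0, hm⟩ then 0 else T i j k - lam i * T ⟨0, hm⟩ j k) := by
  obtain ⟨lam, hlam, hrank⟩ :=
    exists_tensorRankLE_pred_sub_smul_slice (hT ▸ tensorRankLE_tensorRank T) h1
  refine ⟨lam, ?_⟩
  convert hrank using 4 with i j k
  split_ifs with hi
  · simp [hi, hlam]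
  · rfl
end

section
/- Let K := { [μ ⊗ v ⊗ ν ⊗ w ⊗ ω ⊗ u] ∈ Seg(ℙU* × ℙV × ℙV* × ℙW × ℙW* × ℙU) : μ(u) = ω(w) = ν(v) = 0 }. Then K is the unique closed orbit of the group G_{M_⟨U,V,W⟩} = GL(U) × GL(V) × GL(W) acting on the Segre variety Seg(ℙA × ℙB × ℙC), where A = U* ⊗ V, B = V* ⊗ W, C = W* ⊗ U. -/
open scoped BigOperators

/-- Coordinate tensors in `A ⊗ B ⊗ C` where `A = U* ⊗ V`, `B = V* ⊗ W`, `C = W* ⊗ U`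
with `U = ℂ^p`, `V = ℂ^q`, `W = ℂ^s`, in the standard (matrix-unit) bases. -/
abbrev TSp (p q s : ℕ) := (Fin p × Fin q) → (Fin q × Fin s) → (Fin s × Fin p) → ℂ

/-- The natural action of `GL(U) × GL(V) × GL(W)` on `A ⊗ B ⊗ C = (U*⊗V) ⊗ (V*⊗W) ⊗ (W*⊗U)`,
written in coordinates. -/
noncomputable def gact {p q s : ℕ}
    (g : GL (Fin p) ℂ × GL (Fin q) ℂ × GL (Fin s) ℂ) (T : TSp p q s) : TSp p q s :=
  fun a b c =>
    ∑ a' : Fin p × Fin q, ∑ b' : Fin q × Fin s, ∑ c' : Fin s × Fin p,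
      ((g.1⁻¹ : GL (Fin p) ℂ) : Matrix (Fin p) (Fin p) ℂ) a'.1 a.1 *
        ((g.2.1 : Matrix (Fin q) (Fin q) ℂ) a.2 a'.2) *
        ((g.2.1⁻¹ : GL (Fin q) ℂ) : Matrix (Fin q) (Fin q) ℂ) b'.1 b.1 *
        ((g.2.2 : Matrix (Fin s) (Fin s) ℂ) b.2 b'.2) *
        ((g.2.2⁻¹ : GL (Fin s) ℂ) : Matrix (Fin s) (Fin s) ℂ) c'.1 c.1 *
        ((g.1 : Matrix (Fin p) (Fin p) ℂ) c.2 c'.2) *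
        T a' b' c'

/-- The cone over the Segre variety: simple tensors `a ⊗ b ⊗ c` (including `0`). -/
def segreCone (p q s : ℕ) : Set (TSp p q s) :=
  {T | ∃ (a : Fin p × Fin q → ℂ) (b : Fin q × Fin s → ℂ) (c : Fin s × Fin p → ℂ),
    T = fun x y z => a x * b y * c z}

/-- The cone over
`K = { [μ⊗v ⊗ ν⊗w ⊗ ω⊗u] ∈ Seg(ℙU*×ℙV×ℙV*×ℙW×ℙW*×ℙU) : μ(u) = ν(v) = ω(w) = 0 }`. -/
def Kcone (p q s : ℕ) : Set (TSp p q s) :=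
  {T | ∃ (μ : Fin p → ℂ) (v : Fin q → ℂ) (ν : Fin q → ℂ) (w : Fin s → ℂ)
      (ω : Fin s → ℂ) (u : Fin p → ℂ),
    (∑ i, μ i * u i = 0) ∧ (∑ j, ν j * v j = 0) ∧ (∑ k, ω k * w k = 0) ∧
      T = fun x y z => μ x.1 * v x.2 * ν y.1 * w y.2 * ω z.1 * u z.2}

/-- The matrix multiplication tensor `M_⟨U,V,W⟩ = Id_U ⊗ Id_V ⊗ Id_W` in coordinates. -/
def mmT (p q s : ℕ) : TSp p q s :=
  fun a b c => if a.2 = b.1 ∧ b.2 = c.1 ∧ c.2 = a.1 then 1 else 0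

/-!
`K` is one orbit: `GL(n)` is transitive on pairs `(μ, u)` of a nonzero covector and a nonzero
vector with prescribed pairing `μ(u)` (first move `u`, then correct `μ` by a transvection fixing
`u`), and the three pairs `(μ, u)`, `(ν, v)`, `(ω, w)` are moved independently. `K` is closed as
the cone over the compact set of products of normalized isotropic pairs, which avoids `0`.

Conversely, let `[T] = [a ⊗ b ⊗ c]` have a closed orbit. A one-parameter subgroup of the diagonal
torus whose weights on each of `A`, `B`, `C` are pairwise distinct degenerates `T` to its
lowest-weight coordinate tensor `e_i^* ⊗ e_j ⊗ e_j'^* ⊗ e_k ⊗ e_k'^* ⊗ e_i'`. If one of the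
pairings, say `e_i^*(e_i')`, is nonzero, the curve `e_i^* ↦ ε e_i^* + e_m^*` (with `e_i ↦ ε⁻¹ e_i`)
degenerates it further to `e_m^* ⊗ ⋯ ⊗ e_i'`, with `m ≠ i'`. The result is a nonzero point of `K`
in the closure of the orbit, hence in the orbit, so the orbit of `[T]` is `K`.
-/

open Module Matrix Function Filter Topology

section LinearAlgebra

variable {K V : Type*} [Field K] [AddCommGroup V] [Module K V]

theorem exists_linearEquiv_apply_eq_of_linearIndependent [FiniteDimensional K V] {κ : Type*}
    {v w : κ → V} (hv : LinearIndependent K v) (hw : LinearIndependent K w) :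
    ∃ e : V ≃ₗ[K] V, ∀ k, e (v k) = w k := by
  obtain ⟨e, he⟩ := Submodule.exists_linearEquiv_restrict_eq
    (hv.linearCombinationEquiv.symm ≪≫ₗ hw.linearCombinationEquiv)
  refine ⟨e, fun k => ?_⟩
  have hvk : (hv.linearCombinationEquiv (Finsupp.single k 1) : V) = v k := by simp
  rw [← hvk, ← he]
  simp

theorem linearIndependent_pair_of_dual {f : Dual K V} {y z : V} (hy : f y = 1) (hz : f z = 0)
    (hz0 : z ≠ 0) : LinearIndependent K ![y, z] := by
  refine LinearIndependent.pair_iff.mpr fun a b hab => ?_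
  have ha : a = 0 := by simpa [hy, hz] using congrArg f hab
  subst ha
  exact ⟨rfl, by simpa [hz0] using hab⟩

theorem exists_linearEquiv_apply_eq_and_dual_comp_eq [FiniteDimensional K V] {f f' : Dual K V}
    {u u' : V} (hf : f ≠ 0) (hu : u ≠ 0) (hf' : f' ≠ 0) (hu' : u' ≠ 0) (h : f u = f' u') :
    ∃ e : V ≃ₗ[K] V, e u = u' ∧ ∀ x, f' (e x) = f x := by
  obtain ⟨e₀, x', he₀, hx'f, hx'f'⟩ : ∃ (e₀ : V ≃ₗ[K] V) (x' : V),
      e₀ u = u' ∧ f (e₀.symm x') = 1 ∧ f' x' = 1 := by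
    by_cases hc : f u = 0
    · obtain ⟨x, hx⟩ := LinearMap.surjective_of_ne_zero hf 1
      obtain ⟨x', hx'⟩ := LinearMap.surjective_of_ne_zero hf' 1
      obtain ⟨e₀, he₀⟩ := exists_linearEquiv_apply_eq_of_linearIndependent
        (linearIndependent_pair_of_dual hx hc hu)
        (linearIndependent_pair_of_dual hx' (h ▸ hc) hu')
      refine ⟨e₀, x', by simpa using he₀ 1, ?_, hx'⟩
      rw [← show e₀ x = x' by simpa using he₀ 0, LinearEquiv.symm_apply_apply, hx]
    · obtain ⟨e₀, he₀⟩ := exists_linearEquiv_apply_eq_of_linearIndependent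
        (linearIndependent_unique_iff.mpr hu : LinearIndependent K fun _ : Unit => u)
        (linearIndependent_unique_iff.mpr hu' : LinearIndependent K fun _ : Unit => u')
      refine ⟨e₀, (f u)⁻¹ • u', he₀ (), ?_, ?_⟩
      · rw [map_smul, ← he₀ (), LinearEquiv.symm_apply_apply, map_smul, smul_eq_mul,
          inv_mul_cancel₀ hc]
      · rw [map_smul, smul_eq_mul, ← h, inv_mul_cancel₀ hc]
  -- the transvection `z ↦ z + (f ∘ e₀⁻¹ - f') z • x'` fixes `u'` and turns `f'` into `f ∘ e₀⁻¹`
  set φ : Dual K V := f ∘ₗ e₀.symm.toLinearMap - f' with hφ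
  have hφx' : φ x' = 0 := by simp [hφ, hx'f, hx'f']
  refine ⟨e₀.trans (LinearEquiv.transvection hφx'), ?_, fun x => ?_⟩
  · rw [LinearEquiv.trans_apply, LinearEquiv.transvection.apply, he₀]
    simp [hφ, ← he₀, h]
  · rw [LinearEquiv.trans_apply, LinearEquiv.transvection.apply]
    simp [hφ, hx'f']

variable {ι : Type*} [Fintype ι] [DecidableEq ι]

theorem exists_GL_vecMul_inv_eq_and_mulVec_eq {μ u μ' u' : ι → K} (hμ : μ ≠ 0) (hu : u ≠ 0)
    (hμ' : μ' ≠ 0) (hu' : u' ≠ 0) (h : μ ⬝ᵥ u = μ' ⬝ᵥ u') :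
    ∃ g : GL ι K, μ ᵥ* ((g⁻¹ : GL ι K) : Matrix ι ι K) = μ' ∧ (g : Matrix ι ι K) *ᵥ u = u' := by
  obtain ⟨e, heu, he⟩ := exists_linearEquiv_apply_eq_and_dual_comp_eq
    (f := dotProductEquiv K ι μ) (f' := dotProductEquiv K ι μ') (by simpa) hu (by simpa) hu'
    (by simpa)
  let g : GL ι K :=
    ⟨LinearMap.toMatrix' e, LinearMap.toMatrix' e.symm, by simp [← LinearMap.toMatrix'_comp],
      by simp [← LinearMap.toMatrix'_comp]⟩
  refine ⟨g, funext fun j => ?_, by simpa [g]⟩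
  have := he (e.symm (Pi.single j 1))
  simp only [dotProductEquiv_apply_apply, LinearEquiv.apply_symm_apply] at this
  rw [dotProduct_single, mul_one] at this
  rw [this, ← LinearEquiv.coe_coe, ← LinearMap.toMatrix'_mulVec, dotProduct_mulVec,
    dotProduct_single, mul_one]
  rfl

theorem dotProduct_vecMul_inv_mulVec (g : GL ι K) (μ u : ι → K) :
    (μ ᵥ* ((g⁻¹ : GL ι K) : Matrix ι ι K)) ⬝ᵥ ((g : Matrix ι ι K) *ᵥ u) = μ ⬝ᵥ u := by
  rw [dotProduct_mulVec, vecMul_vecMul, ← Units.val_mul, inv_mul_cancel, Units.val_one, vecMul_one]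

end LinearAlgebra

section GeneralLinearGroup

variable {ι : Type*} [Fintype ι] [DecidableEq ι]

theorem exists_degeneration_single [Nontrivial ι] (i k : ι) :
    ∃ i' ≠ k, ∃ μ : ℂ → ι → ℂ, Continuous μ ∧ μ 0 = Pi.single i' 1 ∧
      ∀ ε ≠ 0, ∃ g : GL ι ℂ, ∃ c : ℂ, c ≠ 0 ∧
        Pi.single i 1 ᵥ* ((g⁻¹ : GL ι ℂ) : Matrix ι ι ℂ) = μ ε ∧
        (g : Matrix ι ι ℂ) *ᵥ Pi.single k 1 = c • Pi.single k 1 := by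
  by_cases hik : i = k
  swap
  · exact ⟨i, hik, fun _ => Pi.single i 1, continuous_const, rfl,
      fun _ _ => ⟨1, 1, one_ne_zero, by simp, by simp only [Units.val_one, one_mulVec, one_smul]⟩⟩
  subst hik
  -- `(e_i, e_i)` and `(ε e_i + e_m, ε⁻¹ e_i)` both pair to `1`, so they are `GL`-related
  obtain ⟨m, hm⟩ := exists_ne i
  refine ⟨m, hm, fun ε => ε • Pi.single i 1 + Pi.single m 1, by fun_prop, by simp,
    fun ε hε => ?_⟩
  have hsingle : (Pi.single i 1 : ι → ℂ) ≠ 0 := by simp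
  obtain ⟨g, hg₁, hg₂⟩ := exists_GL_vecMul_inv_eq_and_mulVec_eq hsingle hsingle
    (μ' := ε • Pi.single i 1 + Pi.single m 1) (u' := ε⁻¹ • Pi.single i 1)
    (fun h => by simpa [hm] using congrFun h m) (by simp [hε])
    (by simp [dotProduct_single, hm.symm, hε])
  exact ⟨g, ε⁻¹, inv_ne_zero hε, hg₁, hg₂⟩

def torusGL (t : ℂˣ) (w : ι → ℤ) : GL ι ℂ :=
  Units.map (diagonalRingHom ι ℂ).toMonoidHom (MulEquiv.piUnits.symm fun i => t ^ w i)

theorem coe_torusGL (t : ℂˣ) (w : ι → ℤ) :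
    (torusGL t w : Matrix ι ι ℂ) = diagonal fun i => (t : ℂ) ^ w i := by
  simp [torusGL]

theorem coe_torusGL_inv (t : ℂˣ) (w : ι → ℤ) :
    ((torusGL t w)⁻¹ : GL ι ℂ) = diagonal fun i => (t : ℂ) ^ (-w i) := by
  simp [torusGL]

end GeneralLinearGroup

section ClosedCones

theorem isClosed_setOf_eq_smul_of_isCompact {𝕜 E : Type*} [NormedField 𝕜] [ProperSpace 𝕜]
    [NormedAddCommGroup E] [NormedSpace 𝕜 E] {C : Set E} (hC : IsCompact C) (h0 : (0 : E) ∉ C) :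
    IsClosed {x | ∃ c : 𝕜, ∃ v ∈ C, x = c • v} := by
  refine IsSeqClosed.isClosed fun {f x} hf hx => ?_
  choose c v hvC hfv using hf
  obtain ⟨m, hm0, hm⟩ : ∃ m > 0, ∀ w ∈ C, m ≤ ‖w‖ := by
    obtain ⟨w₀, hw₀, hmin⟩ := hC.exists_isMinOn ⟨v 0, hvC 0⟩ continuous_norm.continuousOn
    exact ⟨‖w₀‖, norm_pos_iff.mpr (ne_of_mem_of_not_mem hw₀ h0), fun w hw => hmin hw⟩
  obtain ⟨w, hwC, φ, hφ, hvφ⟩ := hC.tendsto_subseq hvC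
  obtain ⟨R, hR⟩ := hx.cauchySeq.isBounded_range.exists_norm_le
  have hc : ∀ n, c (φ n) ∈ Metric.closedBall (0 : 𝕜) (R / m) := fun n => by
    rw [mem_closedBall_zero_iff, le_div_iff₀ hm0]
    calc ‖c (φ n)‖ * m ≤ ‖c (φ n)‖ * ‖v (φ n)‖ := by gcongr; exact hm _ (hvC _)
      _ = ‖f (φ n)‖ := by rw [hfv, norm_smul]
      _ ≤ R := hR _ ⟨_, rfl⟩
  obtain ⟨d, -, ψ, hψ, hcψ⟩ := (isCompact_closedBall (0 : 𝕜) (R / m)).tendsto_subseq hc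
  refine ⟨d, w, hwC, tendsto_nhds_unique (hx.comp (hφ.comp hψ).tendsto_atTop) ?_⟩
  simpa only [Function.comp_def, hfv] using hcψ.smul (hvφ.comp hψ.tendsto_atTop)

def unitIsotropicPairs (ι : Type*) [Fintype ι] : Set ((ι → ℂ) × (ι → ℂ)) :=
  {x | ‖x.1‖ = 1 ∧ ‖x.2‖ = 1 ∧ x.1 ⬝ᵥ x.2 = 0}

theorem isCompact_unitIsotropicPairs (ι : Type*) [Fintype ι] :
    IsCompact (unitIsotropicPairs ι) := by
  refine ((isCompact_sphere 0 1).prod (isCompact_sphere 0 1)).of_isClosed_subset ?_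
    fun x hx => ⟨by simpa using hx.1, by simpa using hx.2.1⟩
  exact (isClosed_eq (by fun_prop) continuous_const).inter
    ((isClosed_eq (by fun_prop) continuous_const).inter
      (isClosed_eq (by fun_prop) continuous_const))

theorem normalize_mem_unitIsotropicPairs {ι : Type*} [Fintype ι] {μ u : ι → ℂ} (hμ : μ ≠ 0)
    (hu : u ≠ 0) (h : μ ⬝ᵥ u = 0) :
    ((‖μ‖ : ℂ)⁻¹ • μ, (‖u‖ : ℂ)⁻¹ • u) ∈ unitIsotropicPairs ι :=
  ⟨norm_smul_inv_norm hμ, norm_smul_inv_norm hu, by simp [smul_dotProduct, dotProduct_smul, h]⟩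

end ClosedCones

section OneParameterSubgroups

theorem mem_closure_of_continuous_of_forall_ne {X : Type*} [TopologicalSpace X] {F : ℂ → X}
    (hF : Continuous F) {S : Set X} (hS : ∀ ε ≠ 0, F ε ∈ S) : F 0 ∈ closure S :=
  mem_closure_of_tendsto ((hF.tendsto 0).mono_left (nhdsWithin_le_nhds (s := {0}ᶜ)))
    (eventually_nhdsWithin_of_forall hS)

variable {ι : Type*} [Fintype ι] [DecidableEq ι]

theorem exists_lowestWeight {f : ι → ℤ} (hf : Injective f) {a : ι → ℂ} (ha : a ≠ 0) :
    ∃ i₀, a i₀ ≠ 0 ∧ ∃ F : ℂ → ι → ℂ, Continuous F ∧ F 0 = Pi.single i₀ (a i₀) ∧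
      ∀ t ≠ 0, F t = fun i => t ^ (f i - f i₀) * a i := by
  obtain ⟨i₀, hi₀, hmin⟩ := Finset.exists_min_image {i | a i ≠ 0} f
    (by simpa [Finset.filter_nonempty_iff, funext_iff] using ha)
  simp only [Finset.mem_filter, Finset.mem_univ, true_and] at hi₀ hmin
  -- by injectivity of `f`, every other exponent on the support of `a` is positive
  refine ⟨i₀, hi₀, fun t i => t ^ (f i - f i₀).toNat * a i, by fun_prop, funext fun i => ?_,
    fun t ht => funext fun i => ?_⟩
  · by_cases hi : i = i₀
    · simp [hi]
    by_cases hai : a i = 0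
    · simp [hai, hi]
    have : 0 < (f i - f i₀).toNat := by
      have := lt_of_le_of_ne (hmin i hai) (hf.ne (Ne.symm hi))
      omega
    simp [hi, zero_pow this.ne']
  · by_cases hai : a i = 0
    · simp [hai]
    change t ^ _ * a i = _
    rw [← zpow_natCast, Int.toNat_of_nonneg (sub_nonneg.mpr (hmin i hai))]

theorem injective_sub_mul {m n : ℕ} {M : ℤ} (hM : (n : ℤ) ≤ M) :
    Injective fun x : Fin m × Fin n => (x.2 : ℤ) - M * x.1 := by
  rintro ⟨i, j⟩ ⟨i', j'⟩ h
  have hj := j.isLt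
  have hj' := j'.isLt
  simp only at h
  have hi : (i : ℤ) = i' := by
    rcases lt_trichotomy (i : ℤ) i' with hlt | heq | hgt
    · nlinarith
    · exact heq
    · nlinarith
  have hj : (j : ℤ) = j' := by rw [hi] at h; linarith
  simp only [Prod.mk.injEq, Fin.ext_iff]
  exact ⟨by exact_mod_cast hi, by exact_mod_cast hj⟩

theorem exists_injective_weights (p q s : ℕ) :
    ∃ (wU : Fin p → ℤ) (wV : Fin q → ℤ) (wW : Fin s → ℤ),
      Injective (fun x : Fin p × Fin q => wV x.2 - wU x.1) ∧
      Injective (fun y : Fin q × Fin s => wW y.2 - wV y.1) ∧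
      Injective (fun z : Fin s × Fin p => wU z.2 - wW z.1) := by
  -- each difference is `±(d - M e)` with a digit `0 ≤ d < M` (times `q + 1` for the last one)
  refine ⟨fun i => (q + 1) * (s + 1) * i, fun j => j, fun k => (q + 1) * k,
    injective_sub_mul (by nlinarith), fun y y' h => Prod.swap_injective ?_,
    fun z z' h => Prod.swap_injective ?_⟩
  · refine injective_sub_mul (M := q + 1) (by linarith) ?_
    simp only [Prod.fst_swap, Prod.snd_swap] at h ⊢
    linarith
  · refine injective_sub_mul (M := s + 1) (by linarith) ?_
    simp only [Prod.fst_swap, Prod.snd_swap] at h ⊢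
    exact mul_left_cancel₀ (by positivity : ((q : ℤ) + 1) ≠ 0) (by linarith)

end OneParameterSubgroups

namespace MatMulTensor

variable {p q s : ℕ}

abbrev G (p q s : ℕ) := GL (Fin p) ℂ × GL (Fin q) ℂ × GL (Fin s) ℂ

def rankOne (μ : Fin p → ℂ) (v : Fin q → ℂ) (ν : Fin q → ℂ) (w : Fin s → ℂ) (ω : Fin s → ℂ)
    (u : Fin p → ℂ) : TSp p q s :=
  fun x y z => μ x.1 * v x.2 * ν y.1 * w y.2 * ω z.1 * u z.2

theorem gact_rankOne (g : G p q s) (μ : Fin p → ℂ) (v : Fin q → ℂ) (ν : Fin q → ℂ)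
    (w : Fin s → ℂ) (ω : Fin s → ℂ) (u : Fin p → ℂ) :
    gact g (rankOne μ v ν w ω u) =
      rankOne (μ ᵥ* (g.1⁻¹ : GL (Fin p) ℂ)) ((g.2.1 : Matrix _ _ ℂ) *ᵥ v)
        (ν ᵥ* (g.2.1⁻¹ : GL (Fin q) ℂ)) ((g.2.2 : Matrix _ _ ℂ) *ᵥ w)
        (ω ᵥ* (g.2.2⁻¹ : GL (Fin s) ℂ)) ((g.1 : Matrix _ _ ℂ) *ᵥ u) := by
  funext x y z
  -- grouping each summand by summation index lets the six sums factor
  have hsummand : ∀ (a : Fin p × Fin q) (b : Fin q × Fin s) (c : Fin s × Fin p),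
      ((g.1⁻¹ : GL (Fin p) ℂ) : Matrix _ _ ℂ) a.1 x.1 * (g.2.1 : Matrix _ _ ℂ) x.2 a.2 *
        ((g.2.1⁻¹ : GL (Fin q) ℂ) : Matrix _ _ ℂ) b.1 y.1 * (g.2.2 : Matrix _ _ ℂ) y.2 b.2 *
        ((g.2.2⁻¹ : GL (Fin s) ℂ) : Matrix _ _ ℂ) c.1 z.1 * (g.1 : Matrix _ _ ℂ) z.2 c.2 *
        rankOne μ v ν w ω u a b c =
      (μ a.1 * ((g.1⁻¹ : GL (Fin p) ℂ) : Matrix _ _ ℂ) a.1 x.1) *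
        ((g.2.1 : Matrix _ _ ℂ) x.2 a.2 * v a.2) *
        ((ν b.1 * ((g.2.1⁻¹ : GL (Fin q) ℂ) : Matrix _ _ ℂ) b.1 y.1) *
          ((g.2.2 : Matrix _ _ ℂ) y.2 b.2 * w b.2) *
          ((ω c.1 * ((g.2.2⁻¹ : GL (Fin s) ℂ) : Matrix _ _ ℂ) c.1 z.1) *
            ((g.1 : Matrix _ _ ℂ) z.2 c.2 * u c.2))) := by
    intro a b c
    simp only [rankOne]
    ring
  simp only [gact, hsummand, Fintype.sum_prod_type, ← Finset.mul_sum, ← Finset.sum_mul]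
  simp only [rankOne, vecMul, mulVec, dotProduct]
  ring

noncomputable def gactLinearMap (g : G p q s) : TSp p q s →ₗ[ℂ] TSp p q s where
  toFun := gact g
  map_add' T T' := by
    funext x y z
    simp only [gact, Pi.add_apply, mul_add, Finset.sum_add_distrib]
  map_smul' c T := by
    funext x y z
    simp only [gact, Pi.smul_apply, smul_eq_mul, Finset.mul_sum, RingHom.id_apply]
    refine Finset.sum_congr rfl fun _ _ => Finset.sum_congr rfl fun _ _ =>
      Finset.sum_congr rfl fun _ _ => by ring


def basisTensor (x : Fin p × Fin q) (y : Fin q × Fin s) (z : Fin s × Fin p) : TSp p q s :=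
  rankOne (Pi.single x.1 1) (Pi.single x.2 1) (Pi.single y.1 1) (Pi.single y.2 1)
    (Pi.single z.1 1) (Pi.single z.2 1)

theorem single_single_single_eq_basisTensor (x : Fin p × Fin q) (y : Fin q × Fin s)
    (z : Fin s × Fin p) : Pi.single x (Pi.single y (Pi.single z 1)) = basisTensor x y z := by
  funext a b c
  simp only [basisTensor, rankOne, Pi.single_apply, Prod.ext_iff, ite_apply, Pi.zero_apply]
  split_ifs <;> simp_all

theorem gact_mul (g h : G p q s) (T : TSp p q s) : gact (g * h) T = gact g (gact h T) := by
  suffices gactLinearMap (g * h) = gactLinearMap g ∘ₗ gactLinearMap h from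
    LinearMap.congr_fun this T
  ext x y z a b c
  change gact (g * h) _ a b c = gact g (gact h _) a b c
  simp only [LinearMap.single_apply, single_single_single_eq_basisTensor, basisTensor, gact_rankOne,
    Prod.fst_mul, Prod.snd_mul, _root_.mul_inv_rev, Units.val_mul, vecMul_vecMul, mulVec_mulVec]

theorem gact_one (T : TSp p q s) : gact 1 T = T := by
  suffices gactLinearMap (1 : G p q s) = LinearMap.id from LinearMap.congr_fun this T
  ext x y z a b c
  simp only [LinearMap.comp_apply, LinearMap.id_apply, LinearMap.single_apply,
    single_single_single_eq_basisTensor]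
  change gact 1 (basisTensor x y z) a b c = basisTensor x y z a b c
  simp only [basisTensor, gact_rankOne, Prod.fst_one, Prod.snd_one, inv_one, Units.val_one,
    vecMul_one, one_mulVec]

theorem gact_smul (g : G p q s) (c : ℂ) (T : TSp p q s) : gact g (c • T) = c • gact g T :=
  (gactLinearMap g).map_smul c T

theorem continuous_gact (g : G p q s) : Continuous (gact g) :=
  (gactLinearMap g).continuous_of_finiteDimensional

def orbitCone (T : TSp p q s) : Set (TSp p q s) :=
  {S | ∃ g, ∃ c : ℂ, c ≠ 0 ∧ S = c • gact g T}

theorem smul_gact_mem_orbitCone {X T : TSp p q s} (hX : X ∈ orbitCone T) (g : G p q s) {c : ℂ}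
    (hc : c ≠ 0) : c • gact g X ∈ orbitCone T := by
  obtain ⟨h, d, hd, rfl⟩ := hX
  exact ⟨g * h, c * d, mul_ne_zero hc hd, by rw [gact_smul, gact_mul, smul_smul]⟩

theorem orbitCone_subset_of_mem {X T : TSp p q s} (hX : X ∈ orbitCone T) :
    orbitCone X ⊆ orbitCone T := by
  rintro _ ⟨g, c, hc, rfl⟩
  exact smul_gact_mem_orbitCone hX g hc

theorem mem_orbitCone_symm {X T : TSp p q s} (hX : X ∈ orbitCone T) : T ∈ orbitCone X := by
  obtain ⟨g, c, hc, rfl⟩ := hX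
  refine ⟨g⁻¹, c⁻¹, inv_ne_zero hc, ?_⟩
  rw [gact_smul, ← gact_mul, inv_mul_cancel, gact_one, smul_smul, inv_mul_cancel₀ hc, one_smul]

theorem orbitCone_eq_of_mem {X T : TSp p q s} (hX : X ∈ orbitCone T) :
    orbitCone X = orbitCone T :=
  (orbitCone_subset_of_mem hX).antisymm (orbitCone_subset_of_mem (mem_orbitCone_symm hX))

theorem closure_orbitCone_subset {X T : TSp p q s} (hX : X ∈ closure (orbitCone T)) :
    closure (orbitCone X) ⊆ closure (orbitCone T) := by
  refine closure_minimal ?_ isClosed_closure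
  rintro _ ⟨g, c, hc, rfl⟩
  exact map_mem_closure (f := fun Y => c • gact g Y) ((continuous_gact g).const_smul c) hX
    fun Y hY => smul_gact_mem_orbitCone hY g hc

theorem mem_Kcone {T : TSp p q s} :
    T ∈ Kcone p q s ↔ ∃ (μ u : Fin p → ℂ) (v ν : Fin q → ℂ) (w ω : Fin s → ℂ),
      μ ⬝ᵥ u = 0 ∧ ν ⬝ᵥ v = 0 ∧ ω ⬝ᵥ w = 0 ∧ T = rankOne μ v ν w ω u := by
  constructor
  · rintro ⟨μ, v, ν, w, ω, u, hU, hV, hW, rfl⟩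
    exact ⟨μ, u, v, ν, w, ω, hU, hV, hW, rfl⟩
  · rintro ⟨μ, u, v, ν, w, ω, hU, hV, hW, rfl⟩
    exact ⟨μ, v, ν, w, ω, u, hU, hV, hW, rfl⟩

theorem rankOne_mem_Kcone {μ u : Fin p → ℂ} {v ν : Fin q → ℂ} {w ω : Fin s → ℂ}
    (hU : μ ⬝ᵥ u = 0) (hV : ν ⬝ᵥ v = 0) (hW : ω ⬝ᵥ w = 0) : rankOne μ v ν w ω u ∈ Kcone p q s :=
  ⟨μ, v, ν, w, ω, u, hU, hV, hW, rfl⟩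

theorem zero_mem_Kcone : (0 : TSp p q s) ∈ Kcone p q s :=
  ⟨0, 0, 0, 0, 0, 0, by simp, by simp, by simp, by funext; simp⟩

theorem Kcone_subset_segreCone : Kcone p q s ⊆ segreCone p q s := by
  rintro _ ⟨μ, v, ν, w, ω, u, -, -, -, rfl⟩
  exact ⟨fun x => μ x.1 * v x.2, fun y => ν y.1 * w y.2, fun z => ω z.1 * u z.2,
    by funext x y z; ring⟩

theorem smul_mem_Kcone (c : ℂ) {T : TSp p q s} (hT : T ∈ Kcone p q s) : c • T ∈ Kcone p q s := by
  obtain ⟨μ, u, v, ν, w, ω, hU, hV, hW, rfl⟩ := mem_Kcone.mp hT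
  convert rankOne_mem_Kcone (μ := c • μ) (by rw [smul_dotProduct, hU, smul_zero]) hV hW using 1
  funext x y z
  simp only [rankOne, Pi.smul_apply, smul_eq_mul]
  ring

theorem gact_mem_Kcone (g : G p q s) {T : TSp p q s} (hT : T ∈ Kcone p q s) :
    gact g T ∈ Kcone p q s := by
  obtain ⟨μ, u, v, ν, w, ω, hU, hV, hW, rfl⟩ := mem_Kcone.mp hT
  rw [gact_rankOne]
  exact rankOne_mem_Kcone (by rwa [dotProduct_vecMul_inv_mulVec])
    (by rwa [dotProduct_vecMul_inv_mulVec]) (by rwa [dotProduct_vecMul_inv_mulVec])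

theorem rankOne_ne_zero_iff {μ u : Fin p → ℂ} {v ν : Fin q → ℂ} {w ω : Fin s → ℂ} :
    rankOne μ v ν w ω u ≠ 0 ↔ μ ≠ 0 ∧ v ≠ 0 ∧ ν ≠ 0 ∧ w ≠ 0 ∧ ω ≠ 0 ∧ u ≠ 0 := by
  constructor
  · intro h
    refine ⟨?_, ?_, ?_, ?_, ?_, ?_⟩ <;> rintro rfl <;> exact h (by funext; simp [rankOne])
  · simp only [ne_eq, funext_iff, Pi.zero_apply, not_forall]
    rintro ⟨⟨i₁, h₁⟩, ⟨i₂, h₂⟩, ⟨j₁, h₃⟩, ⟨j₂, h₄⟩, ⟨k₁, h₅⟩, ⟨k₂, h₆⟩⟩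
    exact ⟨(i₁, i₂), (j₁, j₂), (k₁, k₂), by simp [rankOne, *]⟩

theorem exists_gact_eq_of_mem_Kcone {T₁ T₂ : TSp p q s} (hT₁ : T₁ ∈ Kcone p q s)
    (hT₂ : T₂ ∈ Kcone p q s) (h₁ : T₁ ≠ 0) (h₂ : T₂ ≠ 0) : ∃ g, gact g T₁ = T₂ := by
  obtain ⟨μ, u, v, ν, w, ω, hU, hV, hW, rfl⟩ := mem_Kcone.mp hT₁
  obtain ⟨μ', u', v', ν', w', ω', hU', hV', hW', rfl⟩ := mem_Kcone.mp hT₂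
  obtain ⟨hμ, hv, hν, hw, hω, hu⟩ := rankOne_ne_zero_iff.mp h₁
  obtain ⟨hμ', hv', hν', hw', hω', hu'⟩ := rankOne_ne_zero_iff.mp h₂
  obtain ⟨gU, hμg, hug⟩ := exists_GL_vecMul_inv_eq_and_mulVec_eq hμ hu hμ' hu' (hU.trans hU'.symm)
  obtain ⟨gV, hνg, hvg⟩ := exists_GL_vecMul_inv_eq_and_mulVec_eq hν hv hν' hv' (hV.trans hV'.symm)
  obtain ⟨gW, hωg, hwg⟩ := exists_GL_vecMul_inv_eq_and_mulVec_eq hω hw hω' hw' (hW.trans hW'.symm)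
  exact ⟨(gU, gV, gW), by rw [gact_rankOne, hμg, hug, hνg, hvg, hωg, hwg]⟩

theorem orbitCone_union_zero_eq_Kcone {X : TSp p q s} (hX : X ∈ Kcone p q s) (hX0 : X ≠ 0) :
    orbitCone X ∪ {0} = Kcone p q s := by
  ext S
  constructor
  · rintro (⟨g, c, -, rfl⟩ | rfl)
    · exact smul_mem_Kcone c (gact_mem_Kcone g hX)
    · exact zero_mem_Kcone
  · intro hS
    by_cases hS0 : S = 0
    · exact Or.inr hS0
    · obtain ⟨g, rfl⟩ := exists_gact_eq_of_mem_Kcone hX hS hX0 hS0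
      exact Or.inl ⟨g, 1, one_ne_zero, (one_smul ℂ _).symm⟩

theorem rankOne_smul (a b c d e f : ℂ) (μ u : Fin p → ℂ) (v ν : Fin q → ℂ) (w ω : Fin s → ℂ) :
    rankOne (a • μ) (b • v) (c • ν) (d • w) (e • ω) (f • u) =
      (a * b * c * d * e * f) • rankOne μ v ν w ω u := by
  funext x y z
  simp only [rankOne, Pi.smul_apply, smul_eq_mul]
  ring

def rankOneOfPairs (y : ((Fin p → ℂ) × (Fin p → ℂ)) × ((Fin q → ℂ) × (Fin q → ℂ)) ×
    ((Fin s → ℂ) × (Fin s → ℂ))) : TSp p q s :=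
  rankOne y.1.1 y.2.1.2 y.2.1.1 y.2.2.2 y.2.2.1 y.1.2

theorem isClosed_Kcone : IsClosed (Kcone p q s) := by
  set C := rankOneOfPairs '' (unitIsotropicPairs (Fin p) ×ˢ unitIsotropicPairs (Fin q) ×ˢ
    unitIsotropicPairs (Fin s))
  have hC : IsCompact C := by
    refine ((isCompact_unitIsotropicPairs _).prod ((isCompact_unitIsotropicPairs _).prod
      (isCompact_unitIsotropicPairs _))).image ?_
    refine continuous_pi fun x => continuous_pi fun y => continuous_pi fun z => ?_
    simp only [rankOneOfPairs, rankOne]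
    fun_prop
  have h0 : (0 : TSp p q s) ∉ C := by
    rintro ⟨y, ⟨⟨hμ, hu, -⟩, ⟨hν, hv, -⟩, ⟨hω, hw, -⟩⟩, hy⟩
    refine rankOne_ne_zero_iff.mpr ⟨?_, ?_, ?_, ?_, ?_, ?_⟩ hy <;>
      exact ne_zero_of_norm_ne_zero (by simp [*])
  suffices Kcone p q s = {x | ∃ c : ℂ, ∃ v ∈ C, x = c • v} ∪ {0} by
    rw [this]
    exact (isClosed_setOf_eq_smul_of_isCompact hC h0).union isClosed_singleton
  ext T
  constructor
  · intro hT
    obtain ⟨μ, u, v, ν, w, ω, hU, hV, hW, rfl⟩ := mem_Kcone.mp hT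
    by_cases hT0 : rankOne μ v ν w ω u = 0
    · exact Or.inr hT0
    obtain ⟨hμ, hv, hν, hw, hω, hu⟩ := rankOne_ne_zero_iff.mp hT0
    let y := (((‖μ‖ : ℂ)⁻¹ • μ, (‖u‖ : ℂ)⁻¹ • u), ((‖ν‖ : ℂ)⁻¹ • ν, (‖v‖ : ℂ)⁻¹ • v),
      ((‖ω‖ : ℂ)⁻¹ • ω, (‖w‖ : ℂ)⁻¹ • w))
    have hy : y ∈ unitIsotropicPairs (Fin p) ×ˢ unitIsotropicPairs (Fin q) ×ˢ
        unitIsotropicPairs (Fin s) :=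
      ⟨normalize_mem_unitIsotropicPairs hμ hu hU, normalize_mem_unitIsotropicPairs hν hv hV,
        normalize_mem_unitIsotropicPairs hω hw hW⟩
    refine Or.inl ⟨(‖μ‖ : ℂ) * ‖v‖ * ‖ν‖ * ‖w‖ * ‖ω‖ * ‖u‖, rankOneOfPairs y, ⟨y, hy, rfl⟩, ?_⟩
    simp only [y, rankOneOfPairs, rankOne_smul, smul_smul]
    have hn : (‖μ‖ : ℂ) * ‖v‖ * ‖ν‖ * ‖w‖ * ‖ω‖ * ‖u‖ ≠ 0 := by simp [*]
    rw [← mul_inv, ← mul_inv, ← mul_inv, ← mul_inv, ← mul_inv, mul_inv_cancel₀ hn, one_smul]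
  · rintro (⟨c, _, ⟨y, ⟨⟨-, -, hU⟩, ⟨-, -, hV⟩, ⟨-, -, hW⟩⟩, rfl⟩, rfl⟩ | rfl)
    · exact smul_mem_Kcone c (rankOne_mem_Kcone hU hV hW)
    · exact zero_mem_Kcone

theorem gact_torusGL (t : ℂˣ) (wU : Fin p → ℤ) (wV : Fin q → ℤ) (wW : Fin s → ℤ) (T : TSp p q s) :
    gact (torusGL t wU, torusGL t wV, torusGL t wW) T = fun x y z =>
      (t : ℂ) ^ (wV x.2 - wU x.1 + (wW y.2 - wV y.1) + (wU z.2 - wW z.1)) * T x y z := by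
  funext x y z
  simp only [gact, coe_torusGL, coe_torusGL_inv, diagonal_apply, Fintype.sum_prod_type, ite_mul,
    zero_mul, mul_ite, mul_zero, Finset.sum_ite_eq, Finset.sum_ite_eq', Finset.mem_univ, if_true]
  have ht : (t : ℂ) ≠ 0 := t.ne_zero
  simp only [zpow_add₀ ht, zpow_sub₀ ht, _root_.zpow_neg]
  field_simp

theorem segre_single_eq_smul_basisTensor (x : Fin p × Fin q) (y : Fin q × Fin s)
    (z : Fin s × Fin p) (α β γ : ℂ) :
    (fun a b c => (Pi.single x α : _ → ℂ) a * (Pi.single y β : _ → ℂ) b *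
      (Pi.single z γ : _ → ℂ) c : TSp p q s) =
      (α * β * γ) • basisTensor x y z := by
  rw [← single_single_single_eq_basisTensor]
  funext a b c
  simp only [Pi.single_apply, ite_apply, Pi.zero_apply, Pi.smul_apply, smul_eq_mul]
  split_ifs <;> simp

theorem exists_basisTensor_mem_closure_orbitCone {a : Fin p × Fin q → ℂ} {b : Fin q × Fin s → ℂ}
    {c : Fin s × Fin p → ℂ} (hT : (fun x y z => a x * b y * c z : TSp p q s) ≠ 0) :
    ∃ x y z,
      basisTensor x y z ∈ closure (orbitCone (fun x y z => a x * b y * c z : TSp p q s)) := by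
  have ha : a ≠ 0 := by rintro rfl; exact hT (by funext; simp)
  have hb : b ≠ 0 := by rintro rfl; exact hT (by funext; simp)
  have hc : c ≠ 0 := by rintro rfl; exact hT (by funext; simp)
  obtain ⟨wU, wV, wW, hfA, hfB, hfC⟩ := exists_injective_weights p q s
  obtain ⟨xs, hxs, Fa, hFa, hFa0, hFat⟩ := exists_lowestWeight hfA ha
  obtain ⟨ys, hys, Fb, hFb, hFb0, hFbt⟩ := exists_lowestWeight hfB hb
  obtain ⟨zs, hzs, Fc, hFc, hFc0, hFct⟩ := exists_lowestWeight hfC hc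
  set α := a xs * b ys * c zs
  have hα : α ≠ 0 := by simp [α, *]
  refine ⟨xs, ys, zs, ?_⟩
  have key := mem_closure_of_continuous_of_forall_ne
    (S := orbitCone (fun x y z => a x * b y * c z : TSp p q s))
    (F := fun t => α⁻¹ • fun x y z => Fa t x * Fb t y * Fc t z) (by fun_prop) ?_
  · rwa [hFa0, hFb0, hFc0, segre_single_eq_smul_basisTensor, smul_smul, inv_mul_cancel₀ hα,
      one_smul] at key
  intro t ht
  set m := wV xs.2 - wU xs.1 + (wW ys.2 - wV ys.1) + (wU zs.2 - wW zs.1)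
  refine ⟨(torusGL (Units.mk0 t ht) wU, torusGL (Units.mk0 t ht) wV, torusGL (Units.mk0 t ht) wW),
    α⁻¹ * t ^ (-m), mul_ne_zero (inv_ne_zero hα) (zpow_ne_zero _ ht), ?_⟩
  rw [gact_torusGL]
  funext x y z
  simp only [hFat t ht, hFbt t ht, hFct t ht, Pi.smul_apply, smul_eq_mul, Units.val_mk0]
  have hpow : t ^ (wV x.2 - wU x.1 - (wV xs.2 - wU xs.1)) *
      t ^ (wW y.2 - wV y.1 - (wW ys.2 - wV ys.1)) * t ^ (wU z.2 - wW z.1 - (wU zs.2 - wW zs.1)) =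
      t ^ (-m) * t ^ (wV x.2 - wU x.1 + (wW y.2 - wV y.1) + (wU z.2 - wW z.1)) := by
    rw [← zpow_add₀ ht, ← zpow_add₀ ht, ← zpow_add₀ ht]
    congr 1
    simp only [m]
    ring
  linear_combination (α⁻¹ * a x * b y * c z) * hpow

theorem basisTensor_ne_zero (x : Fin p × Fin q) (y : Fin q × Fin s) (z : Fin s × Fin p) :
    basisTensor x y z ≠ 0 :=
  rankOne_ne_zero_iff.mpr (by simp)

theorem exists_basisTensor_mem_Kcone_mem_closure_orbitCone (hp : 2 ≤ p) (hq : 2 ≤ q) (hs : 2 ≤ s)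
    (x : Fin p × Fin q) (y : Fin q × Fin s) (z : Fin s × Fin p) :
    ∃ x' y' z', basisTensor x' y' z' ∈ Kcone p q s ∧
      basisTensor x' y' z' ∈ closure (orbitCone (basisTensor x y z)) := by
  have : Nontrivial (Fin p) := Fin.nontrivial_iff_two_le.mpr hp
  have : Nontrivial (Fin q) := Fin.nontrivial_iff_two_le.mpr hq
  have : Nontrivial (Fin s) := Fin.nontrivial_iff_two_le.mpr hs
  obtain ⟨i', hi', μU, hμU, hμU0, hgU⟩ := exists_degeneration_single x.1 z.2
  obtain ⟨j', hj', μV, hμV, hμV0, hgV⟩ := exists_degeneration_single y.1 x.2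
  obtain ⟨k', hk', μW, hμW, hμW0, hgW⟩ := exists_degeneration_single z.1 y.2
  refine ⟨(i', x.2), (j', y.2), (k', z.2),
    rankOne_mem_Kcone (by simp [hi']) (by simp [hj']) (by simp [hk']), ?_⟩
  have key := mem_closure_of_continuous_of_forall_ne (S := orbitCone (basisTensor x y z))
    (F := fun ε => rankOne (μU ε) (Pi.single x.2 1) (μV ε) (Pi.single y.2 1) (μW ε)
      (Pi.single z.2 1)) (by
        refine continuous_pi fun a => continuous_pi fun b => continuous_pi fun c => ?_
        simp only [rankOne]
        fun_prop) ?_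
  · simp only [hμU0, hμV0, hμW0] at key
    exact key
  intro ε hε
  obtain ⟨gU, cU, hcU, hgU₁, hgU₂⟩ := hgU ε hε
  obtain ⟨gV, cV, hcV, hgV₁, hgV₂⟩ := hgV ε hε
  obtain ⟨gW, cW, hcW, hgW₁, hgW₂⟩ := hgW ε hε
  refine ⟨(gU, gV, gW), (cV * cW * cU)⁻¹, by simp [*], ?_⟩
  rw [basisTensor, gact_rankOne]
  funext a b c
  simp only [hgU₁, hgU₂, hgV₁, hgV₂, hgW₁, hgW₂, rankOne, Pi.smul_apply, smul_eq_mul]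
  field_simp

theorem exists_mem_Kcone_mem_closure_orbitCone (hp : 2 ≤ p) (hq : 2 ≤ q) (hs : 2 ≤ s)
    {T : TSp p q s} (hT : T ∈ segreCone p q s) (hT0 : T ≠ 0) :
    ∃ X ∈ Kcone p q s, X ≠ 0 ∧ X ∈ closure (orbitCone T) := by
  obtain ⟨a, b, c, rfl⟩ := hT
  obtain ⟨x, y, z, hxyz⟩ := exists_basisTensor_mem_closure_orbitCone hT0
  obtain ⟨x', y', z', hK, hcl⟩ := exists_basisTensor_mem_Kcone_mem_closure_orbitCone hp hq hs x y z
  exact ⟨_, hK, basisTensor_ne_zero x' y' z', closure_orbitCone_subset hxyz hcl⟩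

end MatMulTensor

open MatMulTensor

/-- Stated on affine cones: the orbit of `[T]` is the cone `{c • gact g T | c ≠ 0}`, and a set of
points of projective space is closed iff its cone with `0` adjoined is closed. -/
theorem stmt7 (p q s : ℕ) (hp : 2 ≤ p) (hq : 2 ≤ q) (hs : 2 ≤ s) :
    Kcone p q s ⊆ segreCone p q s ∧
    (∀ g, ∀ T ∈ Kcone p q s, gact g T ∈ Kcone p q s) ∧
    (∀ T₁ ∈ Kcone p q s, ∀ T₂ ∈ Kcone p q s, T₁ ≠ 0 → T₂ ≠ 0 →
      ∃ g, ∃ c : ℂ, c ≠ 0 ∧ c • gact g T₁ = T₂) ∧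
    IsClosed (Kcone p q s) ∧
    (∀ T ∈ segreCone p q s, T ≠ 0 →
      IsClosed ({S | ∃ g, ∃ c : ℂ, c ≠ 0 ∧ S = c • gact g T} ∪ {0}) →
      {S | ∃ g, ∃ c : ℂ, c ≠ 0 ∧ S = c • gact g T} ∪ {0} = Kcone p q s) := by
  refine ⟨Kcone_subset_segreCone, fun g T hT => gact_mem_Kcone g hT,
    fun T₁ h₁ T₂ h₂ h₁0 h₂0 => ?_, isClosed_Kcone, fun T hT hT0 hclosed => ?_⟩
  · obtain ⟨g, hg⟩ := exists_gact_eq_of_mem_Kcone h₁ h₂ h₁0 h₂0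
    exact ⟨g, 1, one_ne_zero, by rw [one_smul, hg]⟩
  · change IsClosed (orbitCone T ∪ {0}) at hclosed
    change orbitCone T ∪ {0} = Kcone p q s
    obtain ⟨X, hXK, hX0, hX⟩ := exists_mem_Kcone_mem_closure_orbitCone hp hq hs hT hT0
    have hXT : X ∈ orbitCone T :=
      (closure_minimal Set.subset_union_left hclosed hX).resolve_right hX0
    rw [← orbitCone_eq_of_mem hXT, orbitCone_union_zero_eq_Kcone hXK hX0]
end

section
/- With K as above and k ∈ K, let G_{M,k} ⊆ GL(U) × GL(V) × GL(W) be the subgroup preserving both the matrix multiplication tensor M_⟨U,V,W⟩ and the point k. Then for every point p of the Segre variety Seg(ℙA × ℙB × ℙC), the point k lies in the closure of the orbit G_{M,k} · p. -/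
open scoped BigOperators

/-!
Write `k = (μ ⊗ v) ⊗ (ν ⊗ w) ⊗ (ω ⊗ u)` and `P = a ⊗ b ⊗ c`. Every element of
`GL(U) × GL(V) × GL(W)` fixes `M_⟨U,V,W⟩`. Given `x_U` with `μ(x_U) = 1` and `σ_U` with
`σ_U(u) = 1`, `σ_U(x_U) = 0`, the one-parameter subgroup of `GL(U)` with weights `0`, `2`, `1` on
`u`, on `x_U` and on `ker σ_U ∩ ker μ` scales `μ` by `t⁻²` under the contragredient action and
fixes `u`; together with its analogues on `V` and `W` it rescales `k` by `t⁻⁶`, so it lies in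
`G_{M,k}`. On the other hand `t⁶ • g(t) • P` extends polynomially to `t = 0`, with value
`σ_V(a x_U) σ_W(b x_V) σ_U(c x_W) • k`. It remains to choose the `x`'s and `σ`'s so that these
three pairings are nonzero; over the infinite field `ℂ` each choice only has to avoid finitely
many proper subspaces.
-/

open Matrix Function Filter Topology

structure IsDualPair {K n : Type*} [Field K] [Fintype n] (u x σ μ : n → K) : Prop where
  σ_u : σ ⬝ᵥ u = 1
  σ_x : σ ⬝ᵥ x = 0
  μ_u : μ ⬝ᵥ u = 0
  μ_x : μ ⬝ᵥ x = 1

section OneParameter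

variable {K : Type*} [Field K] {n : Type*} [DecidableEq n]

def oneParamMatrix (u x σ μ : n → K) (t : K) : Matrix n n K :=
  t • 1 + (1 - t) • vecMulVec u σ + (t ^ 2 - t) • vecMulVec x μ

variable {u x σ μ : n → K}

lemma oneParamMatrix_zero : oneParamMatrix u x σ μ 0 = vecMulVec u σ := by
  simp [oneParamMatrix]

lemma oneParamMatrix_one : oneParamMatrix u x σ μ 1 = 1 := by
  simp [oneParamMatrix]

lemma smul_oneParamMatrix_inv {t : K} (ht : t ≠ 0) :
    t ^ 2 • oneParamMatrix u x σ μ t⁻¹ = oneParamMatrix x u μ σ t := by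
  simp only [oneParamMatrix, smul_add, smul_smul]
  field_simp
  module

@[fun_prop]
lemma continuous_oneParamMatrix [TopologicalSpace K] [IsTopologicalRing K] :
    Continuous (oneParamMatrix u x σ μ) := by
  unfold oneParamMatrix
  fun_prop

variable [Fintype n]

lemma IsDualPair.oneParamMatrix_mul (h : IsDualPair u x σ μ) (s t : K) :
    oneParamMatrix u x σ μ s * oneParamMatrix u x σ μ t = oneParamMatrix u x σ μ (s * t) := by
  simp only [oneParamMatrix, add_mul, mul_add, Matrix.one_mul, Matrix.mul_one,
    vecMulVec_mul_vecMulVec, h.σ_u, h.σ_x, h.μ_u, h.μ_x, smul_mul_assoc, mul_smul_comm, zero_smul,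
    one_smul, vecMulVec_zero]
  module

lemma IsDualPair.vecMul_oneParamMatrix (h : IsDualPair u x σ μ) (t : K) :
    μ ᵥ* oneParamMatrix u x σ μ t = t ^ 2 • μ := by
  simp only [oneParamMatrix, vecMul_add, vecMul_smul, vecMul_one, vecMul_vecMulVec, h.μ_u, h.μ_x]
  module

lemma IsDualPair.oneParamMatrix_mulVec (h : IsDualPair u x σ μ) (t : K) :
    oneParamMatrix u x σ μ t *ᵥ u = u := by
  simp [oneParamMatrix, add_mulVec, smul_mulVec, vecMulVec_mulVec, h.σ_u, h.μ_u]

def IsDualPair.oneParamHom (h : IsDualPair u x σ μ) : K →* Matrix n n K where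
  toFun := oneParamMatrix u x σ μ
  map_one' := oneParamMatrix_one
  map_mul' s t := (h.oneParamMatrix_mul s t).symm

def IsDualPair.oneParamGL (h : IsDualPair u x σ μ) : Kˣ →* GL n K :=
  Units.map h.oneParamHom

lemma IsDualPair.coe_oneParamGL (h : IsDualPair u x σ μ) (t : Kˣ) :
    (h.oneParamGL t : Matrix n n K) = oneParamMatrix u x σ μ t :=
  rfl

lemma IsDualPair.coe_oneParamGL_inv (h : IsDualPair u x σ μ) (t : Kˣ) :
    ((h.oneParamGL t)⁻¹ : GL n K) = oneParamMatrix u x σ μ (t : K)⁻¹ := by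
  rw [← map_inv, coe_oneParamGL, Units.val_inv_eq_inv_val]

end OneParameter

section FactorAction

variable {K : Type*} [CommRing K] {m n : Type*} [Fintype m] [Fintype n]

/-- `factorAct M N a` is the matrix `Mᵀ a Nᵀ`, with `a` given by its entries. -/
def factorAct (M : Matrix m m K) (N : Matrix n n K) (a : m × n → K) : m × n → K :=
  fun e => ∑ f, M f.1 e.1 * N e.2 f.2 * a f

lemma factorAct_rankOne (M : Matrix m m K) (N : Matrix n n K) (μ : m → K) (v : n → K) :
    factorAct M N (fun e => μ e.1 * v e.2) = fun e => (μ ᵥ* M) e.1 * (N *ᵥ v) e.2 := by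
  funext e
  simp only [factorAct, vecMul, mulVec, dotProduct, Fintype.sum_prod_type, Finset.sum_mul_sum]
  exact Finset.sum_congr rfl fun i _ => Finset.sum_congr rfl fun j _ => by ring

lemma factorAct_smul_left (c : K) (M : Matrix m m K) (N : Matrix n n K) (a : m × n → K) :
    factorAct (c • M) N a = c • factorAct M N a := by
  funext e
  simp only [factorAct, Pi.smul_apply, smul_eq_mul, Finset.mul_sum, Matrix.smul_apply]
  exact Finset.sum_congr rfl fun f _ => by ring

lemma factorAct_vecMulVec (x μ : m → K) (v σ : n → K) (a : m × n → K) :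
    factorAct (vecMulVec x μ) (vecMulVec v σ) a
      = (σ ⬝ᵥ (x ᵥ* of (curry a))) • fun e => μ e.1 * v e.2 := by
  funext e
  simp only [factorAct, vecMulVec_apply, vecMul, dotProduct, of_apply, curry_apply,
    Fintype.sum_prod_type, Pi.smul_apply, smul_eq_mul, Finset.sum_mul, Finset.mul_sum]
  rw [Finset.sum_comm]
  exact Finset.sum_congr rfl fun i _ => Finset.sum_congr rfl fun j _ => by ring

@[fun_prop]
lemma continuous_factorAct [TopologicalSpace K] [IsTopologicalRing K] {X : Type*}
    [TopologicalSpace X] {M : X → Matrix m m K} {N : X → Matrix n n K} (hM : Continuous M)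
    (hN : Continuous N) (a : m × n → K) : Continuous fun t => factorAct (M t) (N t) a := by
  unfold factorAct
  fun_prop

end FactorAction

section Avoidance

lemma of_curry_ne_zero {K m n : Type*} [Zero K] {f : m × n → K} (hf : f ≠ 0) :
    of (curry f) ≠ 0 :=
  fun h => hf (funext fun e => congrFun (congrFun h e.1) e.2)

variable {K : Type*} [Field K] {n : Type*} [Fintype n] [DecidableEq n]

lemma notMem_span_singleton_comm {V : Type*} [AddCommGroup V] [Module K V] {x y : V}
    (hy : y ≠ 0) (h : x ∉ K ∙ y) : y ∉ K ∙ x := by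
  intro hyx
  obtain ⟨c, rfl⟩ := Submodule.mem_span_singleton.1 hyx
  have hc : c ≠ 0 := by rintro rfl; simp at hy
  rw [Submodule.span_singleton_smul_eq hc.isUnit] at h
  exact h (Submodule.mem_span_singleton_self x)

lemma span_singleton_ne_top {μ u : n → K} (hμ : μ ≠ 0) (hu : u ≠ 0) (hμu : μ ⬝ᵥ u = 0)
    (z : n → K) : K ∙ z ≠ ⊤ := by
  intro htop
  have hmem : ∀ y, ∃ c : K, c • z = y := fun y =>
    Submodule.mem_span_singleton.1 (htop ▸ Submodule.mem_top)
  obtain ⟨c, rfl⟩ := hmem u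
  have hμz : μ ⬝ᵥ z = 0 := by
    rw [dotProduct_smul, smul_eq_mul] at hμu
    exact (mul_eq_zero.1 hμu).resolve_left (by rintro rfl; simp at hu)
  refine hμ (funext fun i => ?_)
  obtain ⟨d, hd⟩ := hmem (Pi.single i 1)
  simpa [← hd, dotProduct_smul, hμz] using (dotProduct_single (v := μ) (1 : K) i).symm

lemma ker_vecMulLinear_ne_top {m : Type*} {A : Matrix n m K} (hA : A ≠ 0) :
    LinearMap.ker A.vecMulLinear ≠ ⊤ := by
  intro h
  refine hA (Matrix.ext fun i j => ?_)
  simpa using congrFun (LinearMap.ker_eq_top.1 h ▸ rfl : A.vecMulLinear (Pi.single i 1) = 0) j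

lemma exists_dotProduct_eq_zero_ne_zero {x z : n → K} (hz : z ∉ K ∙ x) :
    ∃ σ : n → K, σ ⬝ᵥ x = 0 ∧ σ ⬝ᵥ z ≠ 0 := by
  obtain ⟨f, hfz, hf⟩ := Submodule.exists_dual_map_eq_bot_of_notMem hz inferInstance
  have key : ∀ y, (dotProductEquiv K n).symm f ⬝ᵥ y = f y := fun y =>
    congrArg (· y) ((dotProductEquiv K n).apply_symm_apply f)
  refine ⟨(dotProductEquiv K n).symm f, ?_, ?_⟩ <;> rw [key]
  · have : f x ∈ (K ∙ x).map f := Submodule.mem_map_of_mem (Submodule.mem_span_singleton_self x)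
    simpa [hf] using this
  · exact hfz

variable [Infinite K]

lemma exists_dotProduct_eq_one_forall_notMem {ι : Type*} [Finite ι] {φ : n → K} (hφ : φ ≠ 0)
    (p : ι → Submodule K (n → K)) (hp : ∀ i, p i ≠ ⊤) :
    ∃ x, φ ⬝ᵥ x = 1 ∧ ∀ i, x ∉ p i := by
  obtain ⟨x, hx⟩ := Submodule.exists_forall_notMem_of_forall_ne_top
    (fun o : Option ι => o.elim (LinearMap.ker (dotProductEquiv K n φ)) p) <| by
      rintro (_ | i)
      · simpa [LinearMap.ker_eq_top] using hφ
      · exact hp i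
  have hφx : φ ⬝ᵥ x ≠ 0 := by simpa using hx none
  refine ⟨(φ ⬝ᵥ x)⁻¹ • x, by simp [dotProduct_smul, hφx], fun i => ?_⟩
  rw [Submodule.smul_mem_iff _ (inv_ne_zero hφx)]
  exact hx (some i)

lemma exists_isDualPair {u x μ z : n → K} (hu : u ≠ 0) (hμu : μ ⬝ᵥ u = 0) (hμx : μ ⬝ᵥ x = 1)
    (hz : z ∉ K ∙ x) : ∃ σ, IsDualPair u x σ μ ∧ σ ⬝ᵥ z ≠ 0 := by
  have hux : u ∉ K ∙ x := by
    intro hux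
    obtain ⟨c, rfl⟩ := Submodule.mem_span_singleton.1 hux
    simp_all [dotProduct_smul]
  obtain ⟨σ, hσx, hσ⟩ := Module.Dual.exists_forall_mem_ne_zero_of_forall_exists
    (LinearMap.ker (dotProductEquiv K n x)) ![dotProductEquiv K n u, dotProductEquiv K n z] <| by
      refine Fin.forall_fin_two.2 ⟨?_, ?_⟩ <;>
      [obtain ⟨τ, hτx, hτ⟩ := exists_dotProduct_eq_zero_ne_zero hux;
       obtain ⟨τ, hτx, hτ⟩ := exists_dotProduct_eq_zero_ne_zero hz] <;>
      exact ⟨τ, by simpa [dotProduct_comm] using hτx, by simpa [dotProduct_comm] using hτ⟩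
  simp only [Fin.forall_fin_two, LinearMap.mem_ker, Matrix.cons_val_zero, Matrix.cons_val_one,
    dotProductEquiv_apply_apply] at hσ hσx
  rw [dotProduct_comm] at hσ
  refine ⟨(σ ⬝ᵥ u)⁻¹ • σ, ⟨?_, ?_, hμu, hμx⟩, ?_⟩ <;> simp_all [dotProduct_comm]

/-- The three vectors are chosen one after the other, each avoiding two proper subspaces; the
auxiliary `x₀` makes the last, cyclic, condition avoidable. -/
lemma exists_cyclic_vectors {m l : Type*} [Fintype m] [DecidableEq m] [Fintype l] [DecidableEq l]
    {μ u : n → K} {ν v : m → K} {ω w : l → K}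
    (hμ : μ ≠ 0) (hu : u ≠ 0) (hμu : μ ⬝ᵥ u = 0) (hν : ν ≠ 0) (hv : v ≠ 0) (hνv : ν ⬝ᵥ v = 0)
    (hω : ω ≠ 0) (hw : w ≠ 0) (hωw : ω ⬝ᵥ w = 0)
    {A : Matrix n m K} {B : Matrix m l K} {C : Matrix l n K} (hA : A ≠ 0) (hB : B ≠ 0)
    (hC : C ≠ 0) :
    ∃ xU xV xW, μ ⬝ᵥ xU = 1 ∧ ν ⬝ᵥ xV = 1 ∧ ω ⬝ᵥ xW = 1 ∧
      xU ᵥ* A ∉ K ∙ xV ∧ xV ᵥ* B ∉ K ∙ xW ∧ xW ᵥ* C ∉ K ∙ xU := by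
  obtain ⟨x₀, -, hx₀⟩ := exists_dotProduct_eq_one_forall_notMem hω
    ![LinearMap.ker C.vecMulLinear] (Fin.forall_fin_one.2 (ker_vecMulLinear_ne_top hC))
  obtain ⟨xU, hμxU, hxU⟩ := exists_dotProduct_eq_one_forall_notMem hμ
    ![LinearMap.ker A.vecMulLinear, K ∙ (x₀ ᵥ* C)]
    (Fin.forall_fin_two.2 ⟨ker_vecMulLinear_ne_top hA, span_singleton_ne_top hμ hu hμu _⟩)
  obtain ⟨xV, hνxV, hxV⟩ := exists_dotProduct_eq_one_forall_notMem hν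
    ![LinearMap.ker B.vecMulLinear, K ∙ (xU ᵥ* A)]
    (Fin.forall_fin_two.2 ⟨ker_vecMulLinear_ne_top hB, span_singleton_ne_top hν hv hνv _⟩)
  simp only [Fin.forall_fin_one, Fin.forall_fin_two, Matrix.cons_val_zero, Matrix.cons_val_one,
    LinearMap.mem_ker, vecMulLinear_apply] at hx₀ hxU hxV
  obtain ⟨xW, hωxW, hxW⟩ := exists_dotProduct_eq_one_forall_notMem hω
    ![K ∙ (xV ᵥ* B), (K ∙ xU).comap C.vecMulLinear]
    (Fin.forall_fin_two.2 ⟨span_singleton_ne_top hω hw hωw _,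
      fun h => notMem_span_singleton_comm hx₀ hxU.2 (h ▸ Submodule.mem_top : x₀ ∈ _)⟩)
  simp only [Fin.forall_fin_two, Matrix.cons_val_zero, Matrix.cons_val_one, Submodule.mem_comap,
    vecMulLinear_apply] at hxW
  exact ⟨xU, xV, xW, hμxU, hνxV, hωxW, notMem_span_singleton_comm hxU.1 hxV.2,
    notMem_span_singleton_comm hxV.1 hxW.1, hxW.2⟩

end Avoidance

lemma sum_mul_sum_mul_sum {R α β γ : Type*} [CommSemiring R] [Fintype α] [Fintype β] [Fintype γ]
    (f : α → R) (g : β → R) (h : γ → R) :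
    (∑ a, f a) * (∑ b, g b) * (∑ c, h c) = ∑ a, ∑ b, ∑ c, f a * g b * h c := by
  rw [Finset.sum_mul_sum, Finset.sum_mul]
  exact Finset.sum_congr rfl fun a _ => Finset.sum_mul_sum ..

section Action

variable {p q s : ℕ}

lemma gact_rankOne (g : GL (Fin p) ℂ × GL (Fin q) ℂ × GL (Fin s) ℂ)
    (a : Fin p × Fin q → ℂ) (b : Fin q × Fin s → ℂ) (c : Fin s × Fin p → ℂ) :
    gact g (fun x y z => a x * b y * c z) = fun x y z =>
      factorAct (g.1⁻¹ : GL (Fin p) ℂ) g.2.1 a x * factorAct (g.2.1⁻¹ : GL (Fin q) ℂ) g.2.2 b y *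
        factorAct (g.2.2⁻¹ : GL (Fin s) ℂ) g.1 c z := by
  funext x y z
  simp only [gact, factorAct, sum_mul_sum_mul_sum]
  exact Finset.sum_congr rfl fun _ _ => Finset.sum_congr rfl fun _ _ =>
    Finset.sum_congr rfl fun _ _ => by ring

lemma gact_mmT (g : GL (Fin p) ℂ × GL (Fin q) ℂ × GL (Fin s) ℂ) :
    gact g (mmT p q s) = mmT p q s := by
  funext x y z
  simp only [gact, mmT, Fintype.sum_prod_type, mul_ite, mul_one, mul_zero, ite_and,
    Finset.sum_ite_irrel, Finset.sum_const_zero, Finset.sum_ite_eq, Finset.sum_ite_eq',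
    Finset.mem_univ, if_true]
  calc _ = (∑ i, (g.1 : Matrix (Fin p) (Fin p) ℂ) z.2 i * (g.1⁻¹ : GL (Fin p) ℂ) i x.1) *
        (∑ j, (g.2.1 : Matrix (Fin q) (Fin q) ℂ) x.2 j * (g.2.1⁻¹ : GL (Fin q) ℂ) j y.1) *
        (∑ k, (g.2.2 : Matrix (Fin s) (Fin s) ℂ) y.2 k * (g.2.2⁻¹ : GL (Fin s) ℂ) k z.1) := by
        rw [sum_mul_sum_mul_sum]
        exact Finset.sum_congr rfl fun _ _ => Finset.sum_congr rfl fun _ _ =>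
          Finset.sum_congr rfl fun _ _ => by ring
    _ = _ := by
        simp only [← Matrix.mul_apply, ← Units.val_mul, mul_inv_cancel, Units.val_one,
          Matrix.one_apply]
        split_ifs <;> simp_all

end Action

section Degeneration

variable {p q s : ℕ} {μ u xU σU : Fin p → ℂ} {ν v xV σV : Fin q → ℂ} {ω w xW σW : Fin s → ℂ}

lemma gact_oneParamGL_prod_tensor (hU : IsDualPair u xU σU μ) (hV : IsDualPair v xV σV ν)
    (hW : IsDualPair w xW σW ω) (t : ℂˣ) :
    gact (hU.oneParamGL.prod (hV.oneParamGL.prod hW.oneParamGL) t)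
      (fun x y z => μ x.1 * v x.2 * ν y.1 * w y.2 * ω z.1 * u z.2)
      = ((t : ℂ)⁻¹) ^ 6 • fun x y z => μ x.1 * v x.2 * ν y.1 * w y.2 * ω z.1 * u z.2 := by
  have hk : (fun x y z => μ x.1 * v x.2 * ν y.1 * w y.2 * ω z.1 * u z.2 : TSp p q s)
      = fun x y z => (μ x.1 * v x.2) * (ν y.1 * w y.2) * (ω z.1 * u z.2) := by
    funext x y z
    ring
  rw [hk, gact_rankOne]
  funext x y z
  simp only [MonoidHom.prod_apply, factorAct_rankOne, IsDualPair.coe_oneParamGL,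
    IsDualPair.coe_oneParamGL_inv, hU.vecMul_oneParamMatrix, hV.vecMul_oneParamMatrix,
    hW.vecMul_oneParamMatrix, hU.oneParamMatrix_mulVec, hV.oneParamMatrix_mulVec,
    hW.oneParamMatrix_mulVec, Pi.smul_apply, smul_eq_mul]
  ring

lemma pow_smul_gact_oneParamGL_prod (hU : IsDualPair u xU σU μ) (hV : IsDualPair v xV σV ν)
    (hW : IsDualPair w xW σW ω) (t : ℂˣ)
    (a : Fin p × Fin q → ℂ) (b : Fin q × Fin s → ℂ) (c : Fin s × Fin p → ℂ) :
    (t : ℂ) ^ 6 • gact (hU.oneParamGL.prod (hV.oneParamGL.prod hW.oneParamGL) t)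
      (fun x y z => a x * b y * c z) = fun x y z =>
        factorAct (oneParamMatrix xU u μ σU t) (oneParamMatrix v xV σV ν t) a x *
          factorAct (oneParamMatrix xV v ν σV t) (oneParamMatrix w xW σW ω t) b y *
          factorAct (oneParamMatrix xW w ω σW t) (oneParamMatrix u xU σU μ t) c z := by
  rw [gact_rankOne]
  funext x y z
  simp only [MonoidHom.prod_apply, IsDualPair.coe_oneParamGL, IsDualPair.coe_oneParamGL_inv,
    ← smul_oneParamMatrix_inv t.ne_zero, factorAct_smul_left, Pi.smul_apply, smul_eq_mul]
  ring

theorem mem_closure_orbit_of_isDualPair (hU : IsDualPair u xU σU μ) (hV : IsDualPair v xV σV ν)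
    (hW : IsDualPair w xW σW ω)
    (a : Fin p × Fin q → ℂ) (b : Fin q × Fin s → ℂ) (c : Fin s × Fin p → ℂ) (ha : σV ⬝ᵥ (xU ᵥ* of (curry a)) ≠ 0)
    (hb : σW ⬝ᵥ (xV ᵥ* of (curry b)) ≠ 0) (hc : σU ⬝ᵥ (xW ᵥ* of (curry c)) ≠ 0) :
    let k : TSp p q s := fun x y z => μ x.1 * v x.2 * ν y.1 * w y.2 * ω z.1 * u z.2
    k ∈ closure {S | ∃ g, gact g (mmT p q s) = mmT p q s ∧
      (∃ d : ℂ, d ≠ 0 ∧ gact g k = d • k) ∧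
        ∃ e : ℂ, e ≠ 0 ∧ S = e • gact g (fun x y z => a x * b y * c z)} := by
  intro k
  let Γ (t : ℂ) : TSp p q s := fun x y z =>
    factorAct (oneParamMatrix xU u μ σU t) (oneParamMatrix v xV σV ν t) a x *
      factorAct (oneParamMatrix xV v ν σV t) (oneParamMatrix w xW σW ω t) b y *
      factorAct (oneParamMatrix xW w ω σW t) (oneParamMatrix u xU σU μ t) c z
  set d := (σV ⬝ᵥ (xU ᵥ* of (curry a))) * (σW ⬝ᵥ (xV ᵥ* of (curry b))) *
    (σU ⬝ᵥ (xW ᵥ* of (curry c)))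
  have hd : d ≠ 0 := mul_ne_zero (mul_ne_zero ha hb) hc
  have hΓ : Continuous Γ := by
    dsimp only [Γ]
    fun_prop
  have hΓ_zero : Γ 0 = d • k := by
    funext x y z
    simp only [Γ, oneParamMatrix_zero, factorAct_vecMulVec, k, d, Pi.smul_apply, smul_eq_mul]
    ring
  have hlim : Tendsto (fun t => d⁻¹ • Γ t) (𝓝[≠] 0) (𝓝 k) := by
    have := (hΓ.tendsto 0).const_smul d⁻¹
    rw [hΓ_zero, smul_smul, inv_mul_cancel₀ hd, one_smul] at this
    exact this.mono_left nhdsWithin_le_nhds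
  refine mem_closure_of_tendsto hlim (eventually_nhdsWithin_of_forall fun t (ht : t ≠ 0) => ?_)
  refine ⟨hU.oneParamGL.prod (hV.oneParamGL.prod hW.oneParamGL) (Units.mk0 t ht), gact_mmT _,
    ⟨_, by simp [ht], gact_oneParamGL_prod_tensor hU hV hW _⟩, d⁻¹ * t ^ 6,
    mul_ne_zero (inv_ne_zero hd) (pow_ne_zero _ ht), ?_⟩
  rw [← smul_smul]
  exact congrArg (d⁻¹ • ·) (pow_smul_gact_oneParamGL_prod hU hV hW (Units.mk0 t ht) a b c).symm

end Degeneration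

/-- For `k ∈ K`, the subgroup `G_{M,k} ⊆ GL(U)×GL(V)×GL(W)` preserving the matrix
multiplication tensor `M_⟨U,V,W⟩` and the projective point `k` has the property that every
point `p` of the Segre variety contains `k` in its `G_{M,k}`-orbit closure
(stated on affine cones, with projective rescaling). -/
theorem stmt8 (p q s : ℕ) (k : TSp p q s) (hk : k ∈ Kcone p q s) (hk0 : k ≠ 0)
    (P : TSp p q s) (hP : P ∈ segreCone p q s) (hP0 : P ≠ 0) :
    k ∈ closure {S | ∃ g, gact g (mmT p q s) = mmT p q s ∧
      (∃ d : ℂ, d ≠ 0 ∧ gact g k = d • k) ∧ ∃ c : ℂ, c ≠ 0 ∧ S = c • gact g P} := by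
  obtain ⟨μ, v, ν, w, ω, u, hμu, hνv, hωw, rfl⟩ := hk
  obtain ⟨a, b, c, rfl⟩ := hP
  obtain ⟨hμ, hv, hν, hw, hω, hu⟩ : μ ≠ 0 ∧ v ≠ 0 ∧ ν ≠ 0 ∧ w ≠ 0 ∧ ω ≠ 0 ∧ u ≠ 0 := by
    refine ⟨?_, ?_, ?_, ?_, ?_, ?_⟩ <;> rintro rfl <;> exact hk0 (by funext; simp)
  obtain ⟨ha, hb, hc⟩ : a ≠ 0 ∧ b ≠ 0 ∧ c ≠ 0 := by
    refine ⟨?_, ?_, ?_⟩ <;> rintro rfl <;> exact hP0 (by funext; simp)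
  obtain ⟨xU, xV, xW, hμxU, hνxV, hωxW, hA, hB, hC⟩ := exists_cyclic_vectors hμ hu hμu hν hv hνv
    hω hw hωw (of_curry_ne_zero ha) (of_curry_ne_zero hb) (of_curry_ne_zero hc)
  obtain ⟨σU, hU, hσU⟩ := exists_isDualPair hu hμu hμxU hC
  obtain ⟨σV, hV, hσV⟩ := exists_isDualPair hv hνv hνxV hA
  obtain ⟨σW, hW, hσW⟩ := exists_isDualPair hw hωw hωxW hB
  exact mem_closure_orbit_of_isDualPair hU hV hW a b c hσV hσW hσU
end

section
/- The second Coppersmith–Winograd tensor T̃_{q,CW} := Σ_{j=1}^q (a_0⊗b_j⊗c_j + a_j⊗b_0⊗c_j + a_j⊗b_j⊗c_0) + a_0⊗b_0⊗c_{q+1} + a_0⊗b_{q+1}⊗c_0 + a_{q+1}⊗b_0⊗c_0 in ℂ^{q+2} ⊗ ℂ^{q+2} ⊗ ℂ^{q+2} equals the limit as t → 0 of Σ_{i=1}^q t^{-2}(a_0+t a_i)⊗(b_0+t b_i)⊗(c_0+t c_i) − t^{-3}(a_0+t²Σ_j a_j)⊗(b_0+t²Σ_j b_j)⊗(c_0+t²Σ_j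 c_j) + (t^{-3} − q t^{-2})(a_0+t³a_{q+1})⊗(b_0+t³b_{q+1})⊗(c_0+t³c_{q+1}). In particular T̃_{q,CW} has border rank at most q + 2. -/
open scoped BigOperators

/-- The simple (rank one) tensor `a ⊗ b ⊗ c`. -/
def sTen {N : ℕ} (a b c : Fin N → ℂ) : Fin N → Fin N → Fin N → ℂ :=
  fun i j k => a i * b j * c k

/-- Standard basis vector of `ℂ^{q+2}`. -/
noncomputable def e (q : ℕ) (m : Fin (q + 2)) : Fin (q + 2) → ℂ := Pi.single m 1

/-- The (second) Coppersmith–Winograd tensor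
`T̃_{q,CW} = ∑_{j=1}^q (a₀⊗b_j⊗c_j + a_j⊗b₀⊗c_j + a_j⊗b_j⊗c₀)
  + a₀⊗b₀⊗c_{q+1} + a₀⊗b_{q+1}⊗c₀ + a_{q+1}⊗b₀⊗c₀ ∈ ℂ^{q+2} ⊗ ℂ^{q+2} ⊗ ℂ^{q+2}`. -/
noncomputable def cwTensor (q : ℕ) : Fin (q + 2) → Fin (q + 2) → Fin (q + 2) → ℂ :=
  fun i j k =>
    (if i = 0 ∧ j = k ∧ j ≠ 0 ∧ j ≠ Fin.last (q + 1) then 1 else 0) +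
    (if j = 0 ∧ i = k ∧ i ≠ 0 ∧ i ≠ Fin.last (q + 1) then 1 else 0) +
    (if k = 0 ∧ i = j ∧ i ≠ 0 ∧ i ≠ Fin.last (q + 1) then 1 else 0) +
    (if i = 0 ∧ j = 0 ∧ k = Fin.last (q + 1) then 1 else 0) +
    (if i = 0 ∧ j = Fin.last (q + 1) ∧ k = 0 then 1 else 0) +
    (if i = Fin.last (q + 1) ∧ j = 0 ∧ k = 0 then 1 else 0)

/-- The border rank `q+2` curve of the Coppersmith–Winograd tensor:
`∑_{i=1}^q t⁻²(a₀+t aᵢ)⊗(b₀+t bᵢ)⊗(c₀+t cᵢ)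
 − t⁻³(a₀+t²∑aⱼ)⊗(b₀+t²∑bⱼ)⊗(c₀+t²∑cⱼ)
 + (t⁻³ − q t⁻²)(a₀+t³a_{q+1})⊗(b₀+t³b_{q+1})⊗(c₀+t³c_{q+1})`. -/
noncomputable def cwCurve (q : ℕ) (t : ℂ) : Fin (q + 2) → Fin (q + 2) → Fin (q + 2) → ℂ :=
  (∑ m : Fin q, (t ^ 2)⁻¹ •
      sTen (e q 0 + t • e q m.succ.castSucc) (e q 0 + t • e q m.succ.castSucc)
        (e q 0 + t • e q m.succ.castSucc))
  - (t ^ 3)⁻¹ •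
      sTen (e q 0 + t ^ 2 • ∑ m : Fin q, e q m.succ.castSucc)
        (e q 0 + t ^ 2 • ∑ m : Fin q, e q m.succ.castSucc)
        (e q 0 + t ^ 2 • ∑ m : Fin q, e q m.succ.castSucc)
  + ((t ^ 3)⁻¹ - (q : ℂ) * (t ^ 2)⁻¹) •
      sTen (e q 0 + t ^ 3 • e q (Fin.last (q + 1))) (e q 0 + t ^ 3 • e q (Fin.last (q + 1)))
        (e q 0 + t ^ 3 • e q (Fin.last (q + 1)))

/-!
Expand each cube `(a₀ + tˢx)^{⊗3}` multilinearly. The multiples of `a₀⊗a₀⊗a₀` cancel because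
their coefficients `q t⁻²`, `-t⁻³` and `t⁻³ - q t⁻²` sum to zero, and the `t⁻¹` terms cancel because
the second cube is taken along `∑ᵢ aᵢ`, the sum of the directions of the first `q` cubes. The
`t⁰` terms form exactly `T̃_{q,CW}`, so for `t ≠ 0` the curve is `T̃_{q,CW} + t·R(t)` with `R`
polynomial. Each point of the curve is a sum of `q + 2` rank-one tensors, so `T̃_{q,CW}` is a limit
of tensors of rank at most `q + 2`.
-/

open Filter Topology

section Rank

variable {ιa ιb ιc : Type*}

theorem tensorRankLE_zero : tensorRankLE 0 (0 : ιa → ιb → ιc → ℂ) :=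
  ⟨0, 0, 0, fun _ _ _ => by simp⟩

theorem tensorRankLE.add {r s : ℕ} {T S : ιa → ιb → ιc → ℂ} (hT : tensorRankLE r T)
    (hS : tensorRankLE s S) : tensorRankLE (r + s) (T + S) := by
  obtain ⟨u, v, w, hT⟩ := hT
  obtain ⟨u', v', w', hS⟩ := hS
  refine ⟨Fin.append u u', Fin.append v v', Fin.append w w', fun i j k => ?_⟩
  simp [Fin.sum_univ_add, hT, hS]

theorem tensorRankLE.smul {r : ℕ} {T : ιa → ιb → ιc → ℂ} (c : ℂ) (hT : tensorRankLE r T) :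
    tensorRankLE r (c • T) := by
  obtain ⟨u, v, w, hT⟩ := hT
  refine ⟨c • u, v, w, fun i j k => ?_⟩
  simp [hT, Finset.mul_sum, mul_assoc]

theorem tensorRankLE.sub {r s : ℕ} {T S : ιa → ιb → ιc → ℂ} (hT : tensorRankLE r T)
    (hS : tensorRankLE s S) : tensorRankLE (r + s) (T - S) := by
  simpa [sub_eq_add_neg] using hT.add (hS.smul (-1))

theorem tensorRankLE.sum {ι : Type*} (s : Finset ι) {r : ι → ℕ} {T : ι → ιa → ιb → ιc → ℂ}
    (hT : ∀ i ∈ s, tensorRankLE (r i) (T i)) : tensorRankLE (∑ i ∈ s, r i) (∑ i ∈ s, T i) := by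
  classical
  induction s using Finset.induction_on with
  | empty => simpa using tensorRankLE_zero
  | insert i s hi ih =>
    rw [Finset.sum_insert hi, Finset.sum_insert hi]
    exact (hT i (s.mem_insert_self i)).add (ih fun j hj => hT j (Finset.mem_insert_of_mem hj))

theorem tensorRankLE_sTen {N : ℕ} (a b c : Fin N → ℂ) : tensorRankLE 1 (sTen a b c) :=
  ⟨fun _ => a, fun _ => b, fun _ => c, fun _ _ _ => by simp [sTen]⟩

end Rank

section Cube

variable {N : ℕ}

/-- The derivative of `y ↦ y ⊗ y ⊗ y` at `a` in the direction `x`. -/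
def sTenPolar (a x : Fin N → ℂ) : Fin N → Fin N → Fin N → ℂ :=
  sTen x a a + sTen a x a + sTen a a x

theorem sTen_add_smul_cube (a x : Fin N → ℂ) (t : ℂ) :
    sTen (a + t • x) (a + t • x) (a + t • x) =
      sTen a a a + t • sTenPolar a x + t ^ 2 • sTenPolar x a + t ^ 3 • sTen x x x := by
  funext i j k
  simp only [sTen, sTenPolar, Pi.add_apply, Pi.smul_apply, smul_eq_mul]
  ring

theorem sTenPolar_sum {ι : Type*} (s : Finset ι) (a : Fin N → ℂ) (x : ι → Fin N → ℂ) :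
    sTenPolar a (∑ i ∈ s, x i) = ∑ i ∈ s, sTenPolar a (x i) := by
  funext i j k
  simp [sTenPolar, sTen, Finset.sum_apply, Finset.sum_mul, Finset.mul_sum, Finset.sum_add_distrib]

end Cube

theorem Fin.sum_succ_castSucc_eq_sub {M : Type*} [AddCommGroup M] {q : ℕ} (f : Fin (q + 2) → M) :
    ∑ m : Fin q, f m.succ.castSucc = ∑ n, f n - f 0 - f (Fin.last (q + 1)) := by
  rw [Fin.sum_univ_succ, Fin.sum_univ_castSucc]
  simp only [Fin.succ_last, ← Fin.succ_castSucc]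
  abel

section CoppersmithWinograd

variable (q : ℕ)

theorem e_apply (m i : Fin (q + 2)) : e q m i = if i = m then 1 else 0 :=
  Pi.single_apply m 1 i

theorem sum_e_succ_castSucc_mul (j k : Fin (q + 2)) :
    ∑ m : Fin q, e q m.succ.castSucc j * e q m.succ.castSucc k =
      if j = k ∧ j ≠ 0 ∧ j ≠ Fin.last (q + 1) then 1 else 0 := by
  have hdiag : ∀ n, e q n j * e q n k = if j = k then e q n j else 0 := by
    intro n
    simp only [e_apply]
    split_ifs <;> simp_all
  rw [Fin.sum_succ_castSucc_eq_sub (fun n => e q n j * e q n k)]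
  simp only [hdiag]
  by_cases hjk : j = k
  · subst hjk
    by_cases h0 : j = 0
    · subst h0
      simp [e_apply]
    by_cases hl : j = Fin.last (q + 1) <;> simp [e_apply, h0, hl]
  · simp [hjk]

theorem cwTensor_eq_sum_sTenPolar :
    cwTensor q = ∑ m : Fin q, sTenPolar (e q m.succ.castSucc) (e q 0) +
      sTenPolar (e q 0) (e q (Fin.last (q + 1))) := by
  funext i j k
  have hexpand : ∀ x a : Fin (q + 2) → ℂ, sTenPolar x a i j k =
      a i * (x j * x k) + a j * (x i * x k) + a k * (x i * x j) := by
    intro x a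
    simp only [sTenPolar, sTen, Pi.add_apply]
    ring
  simp only [Pi.add_apply, Finset.sum_apply]
  rw [Finset.sum_congr rfl fun m _ => hexpand _ _]
  simp only [Finset.sum_add_distrib, ← Finset.mul_sum, sum_e_succ_castSucc_mul]
  simp only [sTenPolar, sTen, Pi.add_apply, cwTensor, e_apply, ite_zero_mul_ite_zero, one_mul,
    and_assoc]
  ring

noncomputable def cwRemainder (t : ℂ) : Fin (q + 2) → Fin (q + 2) → Fin (q + 2) → ℂ :=
  let a := e q 0
  let s := ∑ m : Fin q, e q m.succ.castSucc
  let L := e q (Fin.last (q + 1))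
  (∑ m : Fin q, sTen (e q m.succ.castSucc) (e q m.succ.castSucc) (e q m.succ.castSucc)
      - sTenPolar s a - (q : ℂ) • sTenPolar a L)
    + t ^ 2 • (sTenPolar L a - sTen s s s) - ((q : ℂ) * t ^ 3) • sTenPolar L a
    + (t ^ 5 - (q : ℂ) * t ^ 6) • sTen L L L

theorem continuous_cwRemainder : Continuous (cwRemainder q) := by
  unfold cwRemainder
  fun_prop

theorem cwCurve_eq {t : ℂ} (ht : t ≠ 0) : cwCurve q t = cwTensor q + t • cwRemainder q t := by
  rw [cwTensor_eq_sum_sTenPolar, cwRemainder, cwCurve]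
  simp only [sTen_add_smul_cube, smul_add, smul_sub, Finset.sum_add_distrib, ← Finset.smul_sum,
    ← sTenPolar_sum, Finset.sum_const, Finset.card_univ, Fintype.card_fin]
  match_scalars <;> field_simp <;> ring

theorem tendsto_cwCurve : Tendsto (cwCurve q) (𝓝[{t : ℂ | t ≠ 0}] 0) (𝓝 (cwTensor q)) := by
  have hcont : Continuous fun t : ℂ => cwTensor q + t • cwRemainder q t := by
    have := continuous_cwRemainder q
    fun_prop
  have hlim := (hcont.tendsto 0).mono_left (nhdsWithin_le_nhds (s := {t : ℂ | t ≠ 0}))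
  rw [zero_smul, add_zero] at hlim
  exact hlim.congr' (eventually_nhdsWithin_of_forall fun t ht => (cwCurve_eq q ht).symm)

theorem tensorRankLE_cwCurve (t : ℂ) : tensorRankLE (q + 2) (cwCurve q t) := by
  have h : tensorRankLE (∑ _m : Fin q, 1 + 1 + 1) (cwCurve q t) :=
    ((tensorRankLE.sum _ fun _ _ => (tensorRankLE_sTen _ _ _).smul _).sub
      ((tensorRankLE_sTen _ _ _).smul _)).add ((tensorRankLE_sTen _ _ _).smul _)
  simpa using h

end CoppersmithWinograd

/-- The Coppersmith–Winograd tensor is the limit as `t → 0` of the explicit rank-`(q+2)` curve;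
in particular it has border rank at most `q + 2`. -/
theorem stmt12 (q : ℕ) :
    Filter.Tendsto (cwCurve q) (nhdsWithin 0 {t : ℂ | t ≠ 0}) (nhds (cwTensor q)) ∧
      borderRankLE (q + 2) (cwTensor q) := by
  have : (𝓝[{t : ℂ | t ≠ 0}] 0).NeBot := inferInstanceAs (𝓝[≠] (0 : ℂ)).NeBot
  exact ⟨tendsto_cwCurve q, mem_closure_of_tendsto (tendsto_cwCurve q)
    (Eventually.of_forall (tensorRankLE_cwCurve q))⟩
end
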